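/- arXiv:1709.06472 — 4 statements merged into one kernel-verified Lean document; each statement's English description precedes it below -/
import Mathlib

section
/- Let m ≥ 1 be an integer, ε ∈ (0,1), and let g : ℝ → [0,∞) be measurable with ‖g‖_{1,ε} := ∫_ℝ g(s)(1+|s|)^ε ds < ∞. Then for every t > 0 and every k, i ∈ {0, 1, …, m+1} with k > i+1, with the convention z₀ := 0, one has ∫_{Δ^{m+1}(t)} g(z_k − z_i) dz ≤ ‖g‖_{1,ε} · ξ_m^{(ε)} · t^{m−ε}. -/
open MeasureTheory

/-- The simplex `Δ^N(t) = {z ∈ ℝ^N : 0 ≤ z₁ ≤ ⋯ ≤ z_N ≤ t}`. -/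
def simplex (N : ℕ) (t : ℝ) : Set (Fin N → ℝ) :=
  {z | Monotone z ∧ ∀ i, z i ∈ Set.Icc (0 : ℝ) t}

/-- Extension of `z` by the convention `z₀ := 0`: `zc z j = z_j` for `1 ≤ j ≤ N`. -/
def zc {N : ℕ} (z : Fin N → ℝ) (j : ℕ) : ℝ :=
  if hj : 1 ≤ j ∧ j ≤ N then z ⟨j - 1, by omega⟩ else 0

/-- The quantity appearing in the maximum defining `ξ_m^{(ε)}`, for a pair `k > i + 1`:
`(k−i−1−ε)^{k−i−1−ε} (m−k+i+1)^{m−k+i+1} / ((m−ε)^{m−ε} (k−i−1)! (m−k+i+1)!)`. -/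
noncomputable def xiTerm (m : ℕ) (ε : ℝ) (k i : ℕ) : ℝ :=
  (((k : ℝ) - i - 1 - ε) ^ ((k : ℝ) - i - 1 - ε) *
      ((m : ℝ) - k + i + 1) ^ ((m : ℝ) - k + i + 1)) /
    (((m : ℝ) - ε) ^ ((m : ℝ) - ε) *
      (Nat.factorial (k - (i + 1)) : ℝ) * (Nat.factorial (m + 1 + i - k) : ℝ))

/-- `ξ_m^{(ε)}`: the maximum of `xiTerm m ε k i` over all pairs `k, i ∈ {0,…,m+1}` with
`k > i + 1` (the supremum of this finite nonempty set of reals). -/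
noncomputable def xi (m : ℕ) (ε : ℝ) : ℝ :=
  sSup {x : ℝ | ∃ k i : ℕ, k ≤ m + 1 ∧ i + 1 < k ∧ x = xiTerm m ε k i}

open Set

section Helpers

lemma measurable_snoc {N : ℕ} :
    Measurable (fun p : ℝ × (Fin N → ℝ) => (Fin.snoc p.2 p.1 : Fin (N+1) → ℝ)) := by
  apply measurable_pi_lambda
  intro j
  rcases Fin.eq_castSucc_or_eq_last j with ⟨j', rfl⟩ | rfl
  · simp only [Fin.snoc_castSucc]
    exact (measurable_pi_apply j').comp measurable_snd
  · simpa [Fin.snoc_last] using measurable_fst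

lemma measurableSet_simplex (N : ℕ) (t : ℝ) : MeasurableSet (simplex N t) := by
  have : simplex N t =
      (⋂ (i : Fin N) (j : Fin N) (_ : i ≤ j), {z : Fin N → ℝ | z i ≤ z j}) ∩
      (⋂ i : Fin N, {z | z i ∈ Set.Icc (0:ℝ) t}) := by
    ext z
    simp only [simplex, Set.mem_setOf_eq, Set.mem_inter_iff, Set.mem_iInter, Monotone]
  rw [this]
  apply MeasurableSet.inter
  · exact MeasurableSet.iInter fun i => MeasurableSet.iInter fun j =>
      MeasurableSet.iInter fun _ =>
        measurableSet_le (measurable_pi_apply i) (measurable_pi_apply j)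
  · exact MeasurableSet.iInter fun i =>
      (measurable_pi_apply i) measurableSet_Icc

lemma snoc_mem_simplex_iff {N : ℕ} {t v : ℝ} {w : Fin N → ℝ} :
    (Fin.snoc w v : Fin (N+1) → ℝ) ∈ simplex (N+1) t ↔ v ∈ Icc 0 t ∧ w ∈ simplex N v := by
  constructor
  · rintro ⟨hmono, hmem⟩
    refine ⟨by simpa using hmem (Fin.last N), ?_, ?_⟩
    · intro a b hab
      have := hmono (show (a.castSucc : Fin (N+1)) ≤ b.castSucc by simpa using hab)
      simpa using this
    · intro j
      constructor
      · have := (hmem j.castSucc).1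
        simpa using this
      · have := hmono (show (j.castSucc : Fin (N+1)) ≤ Fin.last N from Fin.le_last _)
        simpa using this
  · rintro ⟨⟨hv0, hvt⟩, hmono, hmem⟩
    constructor
    · intro a b hab
      rcases Fin.eq_castSucc_or_eq_last b with ⟨b', rfl⟩ | rfl
      · have ha : a ≠ Fin.last N := by
          intro h; subst h
          exact absurd (lt_of_le_of_lt hab (Fin.castSucc_lt_last b')) (lt_irrefl _)
        rcases Fin.eq_castSucc_or_eq_last a with ⟨a', rfl⟩ | rfl
        · simpa using hmono (show a' ≤ b' by simpa using hab)
        · exact absurd rfl ha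
      · rcases Fin.eq_castSucc_or_eq_last a with ⟨a', rfl⟩ | rfl
        · simpa using (hmem a').2
        · simp
    · intro j
      rcases Fin.eq_castSucc_or_eq_last j with ⟨j', rfl⟩ | rfl
      · have := hmem j'
        simp only [Fin.snoc_castSucc]
        exact ⟨this.1, this.2.trans hvt⟩
      · simpa using ⟨hv0, hvt⟩

lemma peel {N : ℕ} (t : ℝ) (f : (Fin (N+1) → ℝ) → ENNReal) (hf : Measurable f) :
    ∫⁻ z in simplex (N+1) t, f z
      = ∫⁻ v in Icc (0:ℝ) t, ∫⁻ w in simplex N v, f (Fin.snoc w v) := by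
  have hmp := MeasureTheory.measurePreserving_piFinSuccAbove
    (fun _ : Fin (N+1) => (volume : Measure ℝ)) (Fin.last N)
  set e := MeasurableEquiv.piFinSuccAbove (fun _ : Fin (N+1) => ℝ) (Fin.last N)
  have hsymm : ∀ p : ℝ × (Fin N → ℝ), e.symm p = Fin.snoc p.2 p.1 := by
    intro p
    exact Fin.insertNth_last' p.1 p.2
  set F : (Fin (N+1) → ℝ) → ENNReal := (simplex (N+1) t).indicator f with hF
  have hFm : Measurable F := hf.indicator (measurableSet_simplex _ _)
  have key : ∫⁻ z, F z = ∫⁻ p : ℝ × (Fin N → ℝ), F (Fin.snoc p.2 p.1)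
      ∂((volume : Measure ℝ).prod (volume : Measure (Fin N → ℝ))) := by
    have h1 : ∫⁻ z, F (e.symm (e z)) = ∫⁻ p, F (e.symm p)
        ∂((volume : Measure ℝ).prod (volume : Measure (Fin N → ℝ))) := by
      have hmp' : MeasurePreserving e (volume : Measure (Fin (N+1) → ℝ))
          ((volume : Measure ℝ).prod (volume : Measure (Fin N → ℝ))) := by
        exact hmp
      exact hmp'.lintegral_comp (hFm.comp e.symm.measurable)
    simp only [MeasurableEquiv.symm_apply_apply] at h1
    rw [h1]
    congr 1
    ext p
    rw [hsymm]
  rw [← lintegral_indicator (measurableSet_simplex _ _), key,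
    lintegral_prod (fun p => F (Fin.snoc p.2 p.1)) ((hFm.comp measurable_snoc).aemeasurable)]
  rw [← lintegral_indicator measurableSet_Icc]
  congr 1
  ext v
  by_cases hv : v ∈ Icc (0:ℝ) t
  · rw [Set.indicator_of_mem hv, ← lintegral_indicator (measurableSet_simplex N v)]
    apply lintegral_congr
    intro w
    by_cases hw : w ∈ simplex N v
    · rw [Set.indicator_of_mem hw, hF,
        Set.indicator_of_mem (snoc_mem_simplex_iff.mpr ⟨hv, hw⟩)]
    · rw [Set.indicator_of_notMem hw, hF, Set.indicator_of_notMem]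
      intro hc
      exact hw (snoc_mem_simplex_iff.mp hc).2
  · rw [Set.indicator_of_notMem hv]
    have h0 : ∀ w : Fin N → ℝ, F (Fin.snoc w v) = 0 := by
      intro w
      rw [hF, Set.indicator_of_notMem]
      intro hc
      exact hv (snoc_mem_simplex_iff.mp hc).1
    simp [h0]

lemma lint_pow {a b : ℝ} (h : a ≤ b) (n : ℕ) :
    ∫⁻ x in Icc a b, ENNReal.ofReal ((x - a)^n)
      = ENNReal.ofReal ((b-a)^(n+1)/(n+1)) := by
  have hint : IntegrableOn (fun x => (x - a)^n) (Icc a b) volume :=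
    (Continuous.pow (by continuity) n).integrableOn_Icc
  rw [← ofReal_integral_eq_lintegral_ofReal hint]
  · congr 1
    rw [MeasureTheory.integral_Icc_eq_integral_Ioc,
      ← intervalIntegral.integral_of_le h,
      intervalIntegral.integral_comp_sub_right (fun x => x^n) a,
      integral_pow]
    simp
  · filter_upwards [ae_restrict_mem measurableSet_Icc] with x hx
    exact pow_nonneg (by linarith [hx.1]) n

lemma reflect (v : ℝ) (F : ℝ → ENNReal) (hF : Measurable F) :
    ∫⁻ u in Icc 0 v, F (v - u) = ∫⁻ s in Icc 0 v, F s := by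
  have key : ∀ u : ℝ, (Icc 0 v).indicator (fun u => F (v - u)) u
      = ((Icc 0 v).indicator F) (v - u) := by
    intro u
    by_cases hu : u ∈ Icc (0:ℝ) v
    · rw [indicator_of_mem hu, indicator_of_mem (by constructor <;> [linarith [hu.2]; linarith [hu.1]])]
    · rw [indicator_of_notMem hu, indicator_of_notMem]
      intro hc
      exact hu ⟨by linarith [hc.2], by linarith [hc.1]⟩
  rw [← lintegral_indicator measurableSet_Icc, ← lintegral_indicator measurableSet_Icc]
  calc ∫⁻ u, (Icc 0 v).indicator (fun u => F (v - u)) u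
      = ∫⁻ u, ((Icc 0 v).indicator F) (v - u) := by simp only [key]
    _ = ∫⁻ s, ((Icc 0 v).indicator F) s :=
        (Measure.measurePreserving_sub_left volume v).lintegral_comp
          (hF.indicator measurableSet_Icc)

lemma swap_lemma (t : ℝ) (Φ : ℝ → ℝ → ENNReal)
    (hΦ : Measurable (Function.uncurry Φ)) :
    ∫⁻ v in Icc 0 t, ∫⁻ s in Icc 0 v, Φ s v
      = ∫⁻ s in Icc 0 t, ∫⁻ v in Icc s t, Φ s v := by
  have hD : MeasurableSet {p : ℝ × ℝ | 0 ≤ p.2 ∧ p.2 ≤ p.1 ∧ p.1 ≤ t} := by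
    apply MeasurableSet.inter
    · exact measurableSet_le measurable_const measurable_snd
    · exact MeasurableSet.inter (measurableSet_le measurable_snd measurable_fst)
        (measurableSet_le measurable_fst measurable_const)
  set D := {p : ℝ × ℝ | 0 ≤ p.2 ∧ p.2 ≤ p.1 ∧ p.1 ≤ t} with hDdef
  set f : ℝ → ℝ → ENNReal := fun v s => D.indicator (fun p => Φ p.2 p.1) (v, s) with hfdef
  have hfm : AEMeasurable (Function.uncurry f) ((volume : Measure ℝ).prod volume) := by
    apply Measurable.aemeasurable
    have : Function.uncurry f = D.indicator (fun p => Φ p.2 p.1) := by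
      ext p; rfl
    rw [this]
    exact ((hΦ.comp (measurable_snd.prodMk measurable_fst))).indicator hD
  have h1 : ∫⁻ v in Icc 0 t, ∫⁻ s in Icc 0 v, Φ s v = ∫⁻ v, ∫⁻ s, f v s := by
    rw [← lintegral_indicator measurableSet_Icc]
    apply lintegral_congr
    intro v
    by_cases hv : v ∈ Icc (0:ℝ) t
    · rw [indicator_of_mem hv, ← lintegral_indicator measurableSet_Icc]
      apply lintegral_congr
      intro s
      by_cases hs : s ∈ Icc (0:ℝ) v
      · rw [indicator_of_mem hs, hfdef]
        simp only
        rw [indicator_of_mem (by exact ⟨hs.1, hs.2, hv.2⟩)]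
      · rw [indicator_of_notMem hs, hfdef]
        simp only
        rw [indicator_of_notMem]
        intro hc
        exact hs ⟨hc.1, hc.2.1⟩
    · rw [indicator_of_notMem hv]
      symm
      simp only [hfdef]
      have : ∀ s, D.indicator (fun p => Φ p.2 p.1) (v, s) = 0 := by
        intro s
        rw [indicator_of_notMem]
        intro hc
        exact hv ⟨le_trans hc.1 hc.2.1, hc.2.2⟩
      simp [this]
  have h2 : ∫⁻ s in Icc 0 t, ∫⁻ v in Icc s t, Φ s v = ∫⁻ s, ∫⁻ v, f v s := by
    rw [← lintegral_indicator measurableSet_Icc]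
    apply lintegral_congr
    intro s
    by_cases hs : s ∈ Icc (0:ℝ) t
    · rw [indicator_of_mem hs, ← lintegral_indicator measurableSet_Icc]
      apply lintegral_congr
      intro v
      by_cases hv : v ∈ Icc s t
      · rw [indicator_of_mem hv, hfdef]
        simp only
        rw [indicator_of_mem (by exact ⟨hs.1, hv.1, hv.2⟩)]
      · rw [indicator_of_notMem hv, hfdef]
        simp only
        rw [indicator_of_notMem]
        intro hc
        exact hv ⟨hc.2.1, hc.2.2⟩
    · rw [indicator_of_notMem hs]
      symm
      simp only [hfdef]
      have : ∀ v, D.indicator (fun p => Φ p.2 p.1) (v, s) = 0 := by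
        intro v
        rw [indicator_of_notMem]
        intro hc
        exact hs ⟨hc.1, le_trans hc.2.1 hc.2.2⟩
      simp [this]
  rw [h1, h2]
  exact lintegral_lintegral_swap hfm

lemma zc_snoc_of_le {N : ℕ} (w : Fin N → ℝ) (v : ℝ) {j : ℕ} (hj : j ≤ N) :
    zc (Fin.snoc w v : Fin (N+1) → ℝ) j = zc w j := by
  unfold zc
  by_cases h1 : 1 ≤ j
  · rw [dif_pos ⟨h1, by omega⟩, dif_pos ⟨h1, hj⟩]
    have : (⟨j - 1, by omega⟩ : Fin (N+1)) = Fin.castSucc ⟨j - 1, by omega⟩ := rfl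
    rw [this, Fin.snoc_castSucc]
  · rw [dif_neg (by omega), dif_neg (by omega)]

lemma zc_snoc_last {N : ℕ} (w : Fin N → ℝ) (v : ℝ) :
    zc (Fin.snoc w v : Fin (N+1) → ℝ) (N+1) = v := by
  unfold zc
  rw [dif_pos ⟨by omega, le_refl _⟩]
  have : (⟨N + 1 - 1, by omega⟩ : Fin (N+1)) = Fin.last N := rfl
  rw [this, Fin.snoc_last]

lemma zc_zero {N : ℕ} (w : Fin N → ℝ) : zc w 0 = 0 := by
  unfold zc; rw [dif_neg (by omega)]

lemma measurable_zc {N : ℕ} (j : ℕ) : Measurable (fun z : Fin N → ℝ => zc z j) := by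
  unfold zc
  by_cases h : 1 ≤ j ∧ j ≤ N
  · simp only [dif_pos h]; exact measurable_pi_apply _
  · simp only [dif_neg h]; exact measurable_const

/-- the recurring inner-integral computation -/
lemma step_integral (A : ENNReal) {q c : ℝ} (hq : 0 ≤ q) (hc : 0 < c)
    {s tt : ℝ} (hst : s ≤ tt) (d : ℕ) :
    ∫⁻ x in Icc s tt, A * ENNReal.ofReal (q * (x - s)^d / c)
      = A * ENNReal.ofReal (q * (tt-s)^(d+1) / (c * (d+1))) := by
  have h1 : ∫⁻ x in Icc s tt, A * ENNReal.ofReal (q * (x - s)^d / c)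
      = ∫⁻ x in Icc s tt, (A * ENNReal.ofReal (q / c)) * ENNReal.ofReal ((x - s)^d) := by
    apply lintegral_congr
    intro x
    rw [mul_assoc, ← ENNReal.ofReal_mul (by positivity)]
    congr 2
    ring
  rw [h1, lintegral_const_mul _ (by fun_prop), lint_pow hst d, mul_assoc,
    ← ENNReal.ofReal_mul (by positivity)]
  congr 2
  field_simp

lemma volume_simplex : ∀ (N : ℕ) {v : ℝ}, 0 ≤ v →
    (volume (simplex N v) : ENNReal) = ENNReal.ofReal (v^N / (Nat.factorial N)) := by
  intro N
  induction N with
  | zero =>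
    intro v hv
    have : simplex 0 v = univ := by
      ext z
      simp only [simplex, mem_setOf_eq, mem_univ, iff_true]
      exact ⟨fun a b _ => a.elim0, fun i => i.elim0⟩
    rw [this]
    simp [MeasureTheory.volume_pi, Measure.pi_univ]
  | succ N ih =>
    intro v hv
    have h1 : (volume (simplex (N+1) v) : ENNReal) = ∫⁻ z in simplex (N+1) v, 1 := by
      rw [setLIntegral_one]
    rw [h1, peel v (fun _ => 1) measurable_const]
    have h2 : ∫⁻ x in Icc (0:ℝ) v, ∫⁻ _w in simplex N x, (1:ENNReal)
        = ∫⁻ x in Icc (0:ℝ) v, (1:ENNReal) * ENNReal.ofReal (1 * (x - 0)^N / (Nat.factorial N)) := by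
      apply setLIntegral_congr_fun_ae measurableSet_Icc
      apply ae_of_all
      intro x hx
      rw [setLIntegral_one, ih hx.1]
      simp
    rw [h2, step_integral 1 zero_le_one (by exact_mod_cast Nat.factorial_pos N) hv N]
    simp only [one_mul]
    congr 1
    rw [sub_zero, Nat.factorial_succ]
    push_cast
    ring

lemma L1 (H : ℝ → ENNReal) (hH : Measurable H) (i' : ℕ) :
    ∀ M, i' + 1 ≤ M → ∀ {v : ℝ}, 0 ≤ v →
    ∫⁻ z in simplex M v, H (zc z (i'+1))
      = ∫⁻ u in Icc 0 v, H u * ENNReal.ofReal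
          (u^i' * (v-u)^(M-(i'+1)) /
            ((Nat.factorial i') * (Nat.factorial (M-(i'+1))))) := by
  intro M hM
  induction M, hM using Nat.le_induction with
  | base =>
    intro v hv
    rw [peel v (fun z => H (zc z (i'+1))) (hH.comp (measurable_zc _))]
    apply setLIntegral_congr_fun_ae measurableSet_Icc
    apply ae_of_all
    intro x hx
    have e1 : ∫⁻ w in simplex i' x, H (zc (Fin.snoc w x) (i'+1))
        = ∫⁻ _w in simplex i' x, H x :=
      lintegral_congr fun w => by rw [zc_snoc_last]
    rw [e1, setLIntegral_const, volume_simplex i' hx.1, Nat.sub_self]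
    simp [Nat.factorial_zero]
  | succ M hM ih =>
    intro v hv
    rw [peel v (fun z => H (zc z (i'+1))) (hH.comp (measurable_zc _))]
    set d := M - (i'+1) with hd
    set C : ℝ := (Nat.factorial i') * (Nat.factorial d) with hC
    have hCpos : 0 < C := by positivity
    set Φ : ℝ → ℝ → ENNReal := fun u x => H u * ENNReal.ofReal (u^i' * (x-u)^d / C)
      with hΦdef
    have h2 : ∫⁻ x in Icc (0:ℝ) v, ∫⁻ w in simplex M x, H (zc (Fin.snoc w x) (i'+1))
        = ∫⁻ x in Icc (0:ℝ) v, ∫⁻ u in Icc 0 x, Φ u x := by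
      apply setLIntegral_congr_fun_ae measurableSet_Icc
      apply ae_of_all
      intro x hx
      have e1 : ∫⁻ w in simplex M x, H (zc (Fin.snoc w x) (i'+1))
          = ∫⁻ w in simplex M x, H (zc w (i'+1)) :=
        lintegral_congr fun w => by rw [zc_snoc_of_le _ _ (by omega)]
      rw [e1, ih hx.1]
    have hΦm : Measurable (Function.uncurry Φ) := by
      apply Measurable.mul
      · exact hH.comp measurable_fst
      · fun_prop
    rw [h2, swap_lemma v Φ hΦm]
    have h3 : ∫⁻ u in Icc (0:ℝ) v, ∫⁻ x in Icc u v, Φ u x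
        = ∫⁻ u in Icc (0:ℝ) v, H u * ENNReal.ofReal
            (u^i' * (v-u)^(d+1) / (C * (d+1))) := by
      apply setLIntegral_congr_fun_ae measurableSet_Icc
      apply ae_of_all
      intro u hu
      exact step_integral (H u) (pow_nonneg hu.1 i') hCpos hu.2 d
    rw [h3]
    apply setLIntegral_congr_fun_ae measurableSet_Icc
    apply ae_of_all
    intro u hu
    have hsub : M + 1 - (i'+1) = d + 1 := by omega
    rw [hsub]
    congr 2
    rw [Nat.factorial_succ]
    push_cast
    ring

lemma L2 (G : ℝ → ENNReal) (hG : Measurable G) (i k : ℕ) (hik : i + 1 < k) :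
    ∀ N, k ≤ N → ∀ {t : ℝ}, 0 ≤ t →
    ∫⁻ z in simplex N t, G (zc z k - zc z i)
      = ∫⁻ s in Icc 0 t, G s * ENNReal.ofReal
          (s^(k-i-1) * (t-s)^(N+i-k) /
            ((Nat.factorial (k-i-1)) * (Nat.factorial (N+i-k)))) := by
  obtain ⟨k', rfl⟩ : ∃ k', k = k'+1 := ⟨k-1, by omega⟩
  intro N hN
  induction N, hN using Nat.le_induction with
  | base =>
    intro t ht
    rw [peel t (fun z => G (zc z (k'+1) - zc z i))
      (hG.comp ((measurable_zc _).sub (measurable_zc _)))]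
    by_cases hi : i = 0
    · subst hi
      apply setLIntegral_congr_fun_ae measurableSet_Icc
      apply ae_of_all
      intro x hx
      have e1 : ∫⁻ w in simplex k' x, G (zc (Fin.snoc w x) (k'+1) - zc (Fin.snoc w x) 0)
          = ∫⁻ _w in simplex k' x, G x :=
        lintegral_congr fun w => by rw [zc_snoc_last, zc_zero, sub_zero]
      rw [e1, setLIntegral_const, volume_simplex k' hx.1]
      have h1 : k' + 1 - 0 - 1 = k' := by omega
      have h2 : k' + 1 + 0 - (k'+1) = 0 := by omega
      rw [h1, h2]
      simp
    · obtain ⟨i', rfl⟩ : ∃ i', i = i'+1 := ⟨i-1, by omega⟩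
      have hik' : i' + 1 + 1 ≤ k' + 1 := le_of_lt hik
      set d1 := k' - (i'+1) with hd1
      set C1 : ℝ := (Nat.factorial i') * (Nat.factorial d1) with hC1
      have hC1pos : 0 < C1 := by positivity
      set Φ : ℝ → ℝ → ENNReal := fun s x =>
        G s * ENNReal.ofReal (s^d1 * (x-s)^i' / C1) with hΦdef
      have h2 : ∫⁻ x in Icc (0:ℝ) t,
            ∫⁻ w in simplex k' x, G (zc (Fin.snoc w x) (k'+1) - zc (Fin.snoc w x) (i'+1))
          = ∫⁻ x in Icc (0:ℝ) t, ∫⁻ s in Icc 0 x, Φ s x := by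
        apply setLIntegral_congr_fun_ae measurableSet_Icc
        apply ae_of_all
        intro x hx
        have e1 : ∫⁻ w in simplex k' x,
              G (zc (Fin.snoc w x) (k'+1) - zc (Fin.snoc w x) (i'+1))
            = ∫⁻ w in simplex k' x, (fun u => G (x - u)) (zc w (i'+1)) :=
          lintegral_congr fun w => by
            rw [zc_snoc_last, zc_snoc_of_le _ _ (by omega)]
        rw [e1, L1 (fun u => G (x - u))
          (hG.comp (measurable_const.sub measurable_id)) i' k' (by omega) hx.1]
        set F : ℝ → ENNReal := fun s => G s * ENNReal.ofReal ((x-s)^i' * s^d1 / C1)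
          with hFdef
        have hFm : Measurable F := by
          apply Measurable.mul hG
          fun_prop
        have e2 : ∫⁻ u in Icc (0:ℝ) x,
              (fun u => G (x - u)) u * ENNReal.ofReal
                (u^i' * (x-u)^(k'-(i'+1)) / ((Nat.factorial i') * (Nat.factorial (k'-(i'+1)))))
            = ∫⁻ u in Icc (0:ℝ) x, F (x - u) := by
          apply lintegral_congr
          intro u
          simp only [hFdef]
          rw [sub_sub_cancel]
        rw [e2, reflect x F hFm]
        apply lintegral_congr
        intro s
        simp only [hFdef, hΦdef]
        congr 2
        ring
      rw [h2, swap_lemma t Φ (by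
        apply Measurable.mul (hG.comp measurable_fst)
        fun_prop)]
      have h3 : ∫⁻ s in Icc (0:ℝ) t, ∫⁻ x in Icc s t, Φ s x
          = ∫⁻ s in Icc (0:ℝ) t, G s * ENNReal.ofReal
              (s^d1 * (t-s)^(i'+1) / (C1 * (i'+1))) := by
        apply setLIntegral_congr_fun_ae measurableSet_Icc
        apply ae_of_all
        intro s hs
        exact step_integral (G s) (pow_nonneg hs.1 d1) hC1pos hs.2 i'
      rw [h3]
      apply setLIntegral_congr_fun_ae measurableSet_Icc
      apply ae_of_all
      intro s hs
      have e3 : k' + 1 - (i'+1) - 1 = d1 := by omega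
      have e4 : k' + 1 + (i'+1) - (k'+1) = i' + 1 := by omega
      rw [e3, e4]
      congr 2
      rw [Nat.factorial_succ]
      push_cast
      ring
  | succ N hN ih =>
    intro t ht
    rw [peel t (fun z => G (zc z (k'+1) - zc z i))
      (hG.comp ((measurable_zc _).sub (measurable_zc _)))]
    set a := k' + 1 - i - 1 with ha
    set e := N + i - (k'+1) with he
    set C : ℝ := (Nat.factorial a) * (Nat.factorial e) with hC
    have hCpos : 0 < C := by positivity
    set Φ : ℝ → ℝ → ENNReal := fun s x =>
      G s * ENNReal.ofReal (s^a * (x-s)^e / C) with hΦdef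
    have h2 : ∫⁻ x in Icc (0:ℝ) t,
          ∫⁻ w in simplex N x, G (zc (Fin.snoc w x) (k'+1) - zc (Fin.snoc w x) i)
        = ∫⁻ x in Icc (0:ℝ) t, ∫⁻ s in Icc 0 x, Φ s x := by
      apply setLIntegral_congr_fun_ae measurableSet_Icc
      apply ae_of_all
      intro x hx
      have e1 : ∫⁻ w in simplex N x,
            G (zc (Fin.snoc w x) (k'+1) - zc (Fin.snoc w x) i)
          = ∫⁻ w in simplex N x, G (zc w (k'+1) - zc w i) :=
        lintegral_congr fun w => by
          rw [zc_snoc_of_le _ _ (by omega), zc_snoc_of_le _ _ (by omega)]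
      rw [e1, ih hx.1]
    rw [h2, swap_lemma t Φ (by
      apply Measurable.mul (hG.comp measurable_fst)
      fun_prop)]
    have h3 : ∫⁻ s in Icc (0:ℝ) t, ∫⁻ x in Icc s t, Φ s x
        = ∫⁻ s in Icc (0:ℝ) t, G s * ENNReal.ofReal
            (s^a * (t-s)^(e+1) / (C * (e+1))) := by
      apply setLIntegral_congr_fun_ae measurableSet_Icc
      apply ae_of_all
      intro s hs
      exact step_integral (G s) (pow_nonneg hs.1 a) hCpos hs.2 e
    rw [h3]
    apply setLIntegral_congr_fun_ae measurableSet_Icc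
    apply ae_of_all
    intro s hs
    have e4 : N + 1 + i - (k'+1) = e + 1 := by omega
    rw [e4]
    congr 2
    rw [Nat.factorial_succ]
    push_cast
    ring

lemma sup_bound {α β T s : ℝ} (hα : 0 < α) (hβ : 0 ≤ β)
    (hs : 0 ≤ s) (hst : s ≤ T) :
    s ^ α * (T - s) ^ β ≤ T ^ (α + β) * (α ^ α * β ^ β / (α + β) ^ (α + β)) := by
  have hT : 0 ≤ T := le_trans hs hst
  have hts : 0 ≤ T - s := by linarith
  have hab : 0 < α + β := by linarith
  rcases eq_or_lt_of_le hβ with hβ0 | hβpos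
  · rw [← hβ0]
    simp only [add_zero, Real.rpow_zero, mul_one]
    have h0 : α ^ α / α ^ α = 1 := by
      have : (0:ℝ) < α ^ α := Real.rpow_pos_of_pos hα α
      field_simp
    calc s ^ α ≤ T ^ α := Real.rpow_le_rpow hs hst hα.le
      _ = T ^ α * (α ^ α / α ^ α) := by rw [h0, mul_one]
  · rcases eq_or_lt_of_le hT with hT0 | hTpos
    · have hs0 : s = 0 := le_antisymm (hT0 ▸ hst) hs
      subst hs0
      rw [Real.zero_rpow hα.ne', zero_mul]
      positivity
    · set w₁ := α / (α + β) with hw₁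
      set w₂ := β / (α + β) with hw₂
      have hw₁pos : 0 < w₁ := by positivity
      have hw₂pos : 0 < w₂ := by positivity
      have hwsum : w₁ + w₂ = 1 := by rw [hw₁, hw₂]; field_simp
      have e1 : w₁ * (α + β) = α := by rw [hw₁]; field_simp
      have e2 : w₂ * (α + β) = β := by rw [hw₂]; field_simp
      set p₁ := s / (T * w₁) with hp₁
      set p₂ := (T - s) / (T * w₂) with hp₂
      have hp₁0 : 0 ≤ p₁ := by positivity
      have hp₂0 : 0 ≤ p₂ := div_nonneg hts (by positivity)
      have gm := Real.geom_mean_le_arith_mean2_weighted hw₁pos.le hw₂pos.le hp₁0 hp₂0 hwsum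
      have hsum : w₁ * p₁ + w₂ * p₂ = 1 := by
        rw [hp₁, hp₂]
        field_simp
        ring
      rw [hsum] at gm
      have key1 : s ^ w₁ * (T - s) ^ w₂ ≤ (T * w₁) ^ w₁ * (T * w₂) ^ w₂ := by
        have hs' : s = (T * w₁) * p₁ := by
          rw [hp₁]; field_simp
        have hts' : T - s = (T * w₂) * p₂ := by
          rw [hp₂]; field_simp
        calc s ^ w₁ * (T - s) ^ w₂
            = ((T * w₁) * p₁) ^ w₁ * ((T * w₂) * p₂) ^ w₂ := by rw [← hs', ← hts']
          _ = (T * w₁) ^ w₁ * p₁ ^ w₁ * ((T * w₂) ^ w₂ * p₂ ^ w₂) := by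
              rw [Real.mul_rpow (by positivity) hp₁0, Real.mul_rpow (by positivity) hp₂0]
          _ = (T * w₁) ^ w₁ * (T * w₂) ^ w₂ * (p₁ ^ w₁ * p₂ ^ w₂) := by ring
          _ ≤ (T * w₁) ^ w₁ * (T * w₂) ^ w₂ * 1 :=
              mul_le_mul_of_nonneg_left gm (by positivity)
          _ = (T * w₁) ^ w₁ * (T * w₂) ^ w₂ := by ring
      have key2 : (s ^ w₁ * (T - s) ^ w₂) ^ (α + β)
          ≤ ((T * w₁) ^ w₁ * (T * w₂) ^ w₂) ^ (α + β) :=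
        Real.rpow_le_rpow (by positivity) key1 hab.le
      have lhs_eq : (s ^ w₁ * (T - s) ^ w₂) ^ (α + β) = s ^ α * (T - s) ^ β := by
        rw [Real.mul_rpow (Real.rpow_nonneg hs _) (Real.rpow_nonneg hts _),
          ← Real.rpow_mul hs, ← Real.rpow_mul hts, e1, e2]
      have rhs_eq : ((T * w₁) ^ w₁ * (T * w₂) ^ w₂) ^ (α + β)
          = T ^ (α + β) * (α ^ α * β ^ β / (α + β) ^ (α + β)) := by
        rw [Real.mul_rpow (Real.rpow_nonneg (by positivity) _)
            (Real.rpow_nonneg (by positivity) _),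
          ← Real.rpow_mul (by positivity), ← Real.rpow_mul (by positivity), e1, e2,
          Real.mul_rpow hT hw₁pos.le, Real.mul_rpow hT hw₂pos.le,
          hw₁, hw₂, Real.div_rpow hα.le hab.le, Real.div_rpow hβ hab.le]
        have eT : T ^ α * T ^ β = T ^ (α + β) := (Real.rpow_add hTpos α β).symm
        have eab : (α + β) ^ α * (α + β) ^ β = (α + β) ^ (α + β) :=
          (Real.rpow_add hab α β).symm
        have h1 : (0:ℝ) < (α + β) ^ α := Real.rpow_pos_of_pos hab α
        have h2 : (0:ℝ) < (α + β) ^ β := Real.rpow_pos_of_pos hab β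
        rw [← eT, ← eab]
        field_simp
      rw [lhs_eq, rhs_eq] at key2
      exact key2

lemma pointwise_bound {m a c : ℕ} {ε t s : ℝ} (hε : ε ∈ Set.Ioo (0:ℝ) 1)
    (ha : 1 ≤ a) (hac : a + c = m) (hs : s ∈ Set.Icc 0 t) :
    s^a * (t-s)^c / ((Nat.factorial a : ℝ) * (Nat.factorial c))
      ≤ (1+s)^ε * (((a:ℝ)-ε) ^ ((a:ℝ)-ε) * (c:ℝ) ^ (c:ℝ) * t ^ ((m:ℝ)-ε) /
          (((m:ℝ)-ε) ^ ((m:ℝ)-ε) * (Nat.factorial a : ℝ) * (Nat.factorial c))) := by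
  obtain ⟨hs0, hst⟩ := hs
  have hts : 0 ≤ t - s := by linarith
  have hα : 0 < (a:ℝ) - ε := by
    have : (1:ℝ) ≤ a := by exact_mod_cast ha
    linarith [hε.2]
  have hβ : (0:ℝ) ≤ (c:ℝ) := Nat.cast_nonneg c
  have hmε : ((a:ℝ) - ε) + (c:ℝ) = (m:ℝ) - ε := by
    have : (m:ℝ) = (a:ℝ) + (c:ℝ) := by exact_mod_cast hac.symm
    rw [this]; ring
  have key := sup_bound hα hβ hs0 hst
  rw [hmε] at key
  -- step A : s^a ≤ (1+s)^ε * s^((a:ℝ)-ε)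
  have stepA : (s:ℝ)^a ≤ (1+s)^ε * s ^ ((a:ℝ)-ε) := by
    rcases eq_or_lt_of_le hs0 with h0 | hpos
    · rw [← h0, zero_pow (by omega), Real.zero_rpow hα.ne']
      simp
    · have e1 : (s:ℝ)^a = s ^ (ε + ((a:ℝ)-ε)) := by
        rw [show ε + ((a:ℝ)-ε) = (a:ℝ) by ring, Real.rpow_natCast]
      rw [e1, Real.rpow_add hpos]
      apply mul_le_mul_of_nonneg_right _ (Real.rpow_nonneg hs0 _)
      exact Real.rpow_le_rpow hs0 (by linarith) hε.1.le
  have stepB : s^a * (t-s)^c ≤ (1+s)^ε *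
      (((a:ℝ)-ε) ^ ((a:ℝ)-ε) * (c:ℝ) ^ (c:ℝ) * t ^ ((m:ℝ)-ε) / ((m:ℝ)-ε) ^ ((m:ℝ)-ε)) := by
    have e2 : ((t-s):ℝ)^c = (t-s) ^ ((c:ℝ)) := (Real.rpow_natCast _ c).symm
    calc s^a * (t-s)^c ≤ ((1+s)^ε * s ^ ((a:ℝ)-ε)) * (t-s)^c := by
          apply mul_le_mul_of_nonneg_right stepA (pow_nonneg hts c)
      _ = (1+s)^ε * (s ^ ((a:ℝ)-ε) * (t-s) ^ ((c:ℝ))) := by rw [e2]; ring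
      _ ≤ (1+s)^ε * (t ^ (((m:ℝ)-ε)) * (((a:ℝ)-ε) ^ ((a:ℝ)-ε) * (c:ℝ) ^ (c:ℝ) / ((m:ℝ)-ε) ^ ((m:ℝ)-ε))) := by
          apply mul_le_mul_of_nonneg_left key (Real.rpow_nonneg (by linarith) ε)
      _ = (1+s)^ε * (((a:ℝ)-ε) ^ ((a:ℝ)-ε) * (c:ℝ) ^ (c:ℝ) * t ^ ((m:ℝ)-ε) / ((m:ℝ)-ε) ^ ((m:ℝ)-ε)) := by
          ring
  have hD : (0:ℝ) < (Nat.factorial a : ℝ) * (Nat.factorial c) := by positivity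
  calc s^a * (t-s)^c / ((Nat.factorial a : ℝ) * (Nat.factorial c))
      ≤ ((1+s)^ε * (((a:ℝ)-ε) ^ ((a:ℝ)-ε) * (c:ℝ) ^ (c:ℝ) * t ^ ((m:ℝ)-ε) / ((m:ℝ)-ε) ^ ((m:ℝ)-ε)))
        / ((Nat.factorial a : ℝ) * (Nat.factorial c)) := by
          exact (div_le_div_iff_of_pos_right hD).mpr stepB
    _ = (1+s)^ε * (((a:ℝ)-ε) ^ ((a:ℝ)-ε) * (c:ℝ) ^ (c:ℝ) * t ^ ((m:ℝ)-ε) /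
          (((m:ℝ)-ε) ^ ((m:ℝ)-ε) * (Nat.factorial a : ℝ) * (Nat.factorial c))) := by
          field_simp

lemma le_xi (m : ℕ) (ε : ℝ) {k i : ℕ} (hk : k ≤ m + 1) (hik : i + 1 < k) :
    xiTerm m ε k i ≤ xi m ε := by
  have hfin : ({x : ℝ | ∃ k i : ℕ, k ≤ m + 1 ∧ i + 1 < k ∧ x = xiTerm m ε k i}).Finite := by
    apply Set.Finite.subset (Set.Finite.image (fun p : ℕ × ℕ => xiTerm m ε p.1 p.2)
      ((Set.finite_Iic (m+1)).prod (Set.finite_Iic (m+1))))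
    rintro x ⟨k, i, h1, h2, rfl⟩
    exact ⟨(k, i), ⟨h1, by simp only [Set.mem_Iic]; omega⟩, rfl⟩
  exact le_csSup hfin.bddAbove ⟨k, i, hk, hik, rfl⟩

end Helpers

/-- Part (A.2) of the technical Lemma: for `m ≥ 1`, `ε ∈ (0,1)`, a nonnegative measurable
`g` with `‖g‖_{1,ε} = ∫ g(s)(1+|s|)^ε ds < ∞`, every `t > 0` and `k, i ∈ {0,…,m+1}` with
`k > i + 1`, one has `∫_{Δ^{m+1}(t)} g(z_k − z_i) dz ≤ ‖g‖_{1,ε} ξ_m^{(ε)} t^{m−ε}`. -/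
theorem simplex_integral_le (m : ℕ) (hm : 1 ≤ m) (ε : ℝ) (hε : ε ∈ Set.Ioo (0:ℝ) 1)
    (g : ℝ → ℝ) (hg0 : ∀ s, 0 ≤ g s) (hgm : Measurable g)
    (hg1ε : Integrable (fun s => g s * (1 + |s|) ^ ε))
    (t : ℝ) (ht : 0 < t)
    (k i : ℕ) (hk : k ≤ m + 1) (hik : i + 1 < k) :
    ∫ z in simplex (m + 1) t, g (zc z k - zc z i)
      ≤ (∫ s, g s * (1 + |s|) ^ ε) * xi m ε * t ^ ((m : ℝ) - ε) := by
  set a := k - i - 1 with haDef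
  set c := m + 1 + i - k with hcDef
  have ha1 : 1 ≤ a := by omega
  have hac : a + c = m := by omega
  have hGm : Measurable (fun s => ENNReal.ofReal (g s)) := hgm.ennreal_ofReal
  have hmeas : Measurable fun z : Fin (m+1) → ℝ => g (zc z k - zc z i) :=
    hgm.comp ((measurable_zc k).sub (measurable_zc i))
  rw [integral_eq_lintegral_of_nonneg_ae (ae_of_all _ fun z => hg0 _)
    hmeas.aestronglyMeasurable]
  have hL2 : ∫⁻ z in simplex (m+1) t, ENNReal.ofReal (g (zc z k - zc z i))
      = ∫⁻ s in Icc (0:ℝ) t, ENNReal.ofReal (g s) * ENNReal.ofReal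
          (s^a * (t-s)^c / ((Nat.factorial a : ℝ) * (Nat.factorial c))) :=
    L2 (fun s => ENNReal.ofReal (g s)) hGm i k hik (m+1) hk ht.le
  set I := ∫ s, g s * (1 + |s|) ^ ε with hIDef
  have hI0 : 0 ≤ I :=
    integral_nonneg fun s => mul_nonneg (hg0 s) (Real.rpow_nonneg (by positivity) _)
  have haε : 0 < (a:ℝ) - ε := by
    have : (1:ℝ) ≤ (a:ℝ) := by exact_mod_cast ha1
    linarith [hε.2]
  have hmεpos : 0 < (m:ℝ) - ε := by
    have : (1:ℝ) ≤ (m:ℝ) := by exact_mod_cast hm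
    linarith [hε.2]
  set KC : ℝ := ((a:ℝ)-ε) ^ ((a:ℝ)-ε) * (c:ℝ) ^ (c:ℝ) /
      (((m:ℝ)-ε) ^ ((m:ℝ)-ε) * (Nat.factorial a : ℝ) * (Nat.factorial c)) with hKCdef
  have hKC0 : 0 ≤ KC := by
    rw [hKCdef]
    apply div_nonneg
    · exact mul_nonneg (Real.rpow_nonneg haε.le _) (Real.rpow_nonneg (Nat.cast_nonneg c) _)
    · apply mul_nonneg (mul_nonneg (Real.rpow_nonneg hmεpos.le _) (by positivity)) (by positivity)
  have htm : (0:ℝ) ≤ t ^ ((m:ℝ)-ε) := Real.rpow_nonneg ht.le _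
  have hrpowm : Measurable (fun s : ℝ => g s * (1 + |s|) ^ ε) := by
    apply hgm.mul
    fun_prop
  have chain : ∫⁻ s in Icc (0:ℝ) t, ENNReal.ofReal (g s) * ENNReal.ofReal
        (s^a * (t-s)^c / ((Nat.factorial a : ℝ) * (Nat.factorial c)))
      ≤ ENNReal.ofReal I * ENNReal.ofReal (KC * t ^ ((m:ℝ)-ε)) := by
    have step1 : ∀ s ∈ Icc (0:ℝ) t,
        ENNReal.ofReal (g s) * ENNReal.ofReal
          (s^a * (t-s)^c / ((Nat.factorial a : ℝ) * (Nat.factorial c)))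
        ≤ ENNReal.ofReal (g s * (1 + |s|) ^ ε) * ENNReal.ofReal (KC * t ^ ((m:ℝ)-ε)) := by
      intro s hs
      have habs : |s| = s := abs_of_nonneg hs.1
      have hpb := pointwise_bound hε ha1 hac hs
      have hre : ((a:ℝ)-ε) ^ ((a:ℝ)-ε) * (c:ℝ) ^ (c:ℝ) * t ^ ((m:ℝ)-ε) /
          (((m:ℝ)-ε) ^ ((m:ℝ)-ε) * (Nat.factorial a:ℝ) * (Nat.factorial c))
          = KC * t ^ ((m:ℝ)-ε) := by rw [hKCdef]; ring
      rw [hre] at hpb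
      calc ENNReal.ofReal (g s) * ENNReal.ofReal
            (s^a * (t-s)^c / ((Nat.factorial a : ℝ) * (Nat.factorial c)))
          ≤ ENNReal.ofReal (g s) * ENNReal.ofReal ((1+s)^ε * (KC * t ^ ((m:ℝ)-ε))) :=
            mul_le_mul_right (ENNReal.ofReal_le_ofReal hpb) _
        _ = ENNReal.ofReal (g s * (1 + |s|) ^ ε) * ENNReal.ofReal (KC * t ^ ((m:ℝ)-ε)) := by
            rw [ENNReal.ofReal_mul (Real.rpow_nonneg (by linarith [hs.1] : (0:ℝ) ≤ 1+s) ε),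
              ← mul_assoc, ← ENNReal.ofReal_mul (hg0 s), habs]
    calc ∫⁻ s in Icc (0:ℝ) t, ENNReal.ofReal (g s) * ENNReal.ofReal
            (s^a * (t-s)^c / ((Nat.factorial a : ℝ) * (Nat.factorial c)))
        ≤ ∫⁻ s in Icc (0:ℝ) t, ENNReal.ofReal (g s * (1 + |s|) ^ ε)
            * ENNReal.ofReal (KC * t ^ ((m:ℝ)-ε)) := by
          apply lintegral_mono_ae
          filter_upwards [ae_restrict_mem measurableSet_Icc] with s hs
          exact step1 s hs
      _ = (∫⁻ s in Icc (0:ℝ) t, ENNReal.ofReal (g s * (1 + |s|) ^ ε))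
            * ENNReal.ofReal (KC * t ^ ((m:ℝ)-ε)) :=
          lintegral_mul_const _ hrpowm.ennreal_ofReal
      _ ≤ (∫⁻ s, ENNReal.ofReal (g s * (1 + |s|) ^ ε))
            * ENNReal.ofReal (KC * t ^ ((m:ℝ)-ε)) :=
          mul_le_mul_left (setLIntegral_le_lintegral _ _) _
      _ = ENNReal.ofReal I * ENNReal.ofReal (KC * t ^ ((m:ℝ)-ε)) := by
          rw [ofReal_integral_eq_lintegral_ofReal hg1ε
            (ae_of_all _ fun s => mul_nonneg (hg0 s) (by positivity))]
  have hfin : ENNReal.ofReal I * ENNReal.ofReal (KC * t ^ ((m:ℝ)-ε)) ≠ ⊤ :=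
    ENNReal.mul_ne_top ENNReal.ofReal_ne_top ENNReal.ofReal_ne_top
  have hfinal := ENNReal.toReal_mono hfin (le_trans (le_of_eq hL2) chain)
  rw [ENNReal.toReal_mul, ENNReal.toReal_ofReal hI0,
    ENNReal.toReal_ofReal (mul_nonneg hKC0 htm)] at hfinal
  refine le_trans hfinal ?_
  have hxile : KC ≤ xi m ε := by
    have hkia : (k - i : ℕ) = a + 1 := by omega
    have hA : ((k - i:ℕ):ℝ) - ((0:ℕ):ℝ) - 1 - ε = (a:ℝ) - ε := by
      rw [hkia]; push_cast; ring
    have hB : (m:ℝ) - ((k - i:ℕ):ℝ) + ((0:ℕ):ℝ) + 1 = (c:ℝ) := by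
      rw [hkia]
      have hmr : (m:ℝ) = (a:ℝ) + (c:ℝ) := by exact_mod_cast hac.symm
      rw [hmr]; push_cast; ring
    have hE3 : (k - i) - (0+1) = a := by omega
    have hE4 : m + 1 + 0 - (k - i) = c := by omega
    have hKCeq : KC = xiTerm m ε (k - i) 0 := by
      unfold xiTerm
      rw [hE3, hE4, hA, hB, hKCdef]
    rw [hKCeq]
    exact le_xi m ε (by omega) (by omega)
  calc I * (KC * t ^ ((m:ℝ)-ε)) ≤ I * (xi m ε * t ^ ((m:ℝ)-ε)) :=
        mul_le_mul_of_nonneg_left (mul_le_mul_of_nonneg_right hxile htm) hI0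
    _ = I * xi m ε * t ^ ((m:ℝ)-ε) := by ring
end

section
/- Let R be a (not necessarily commutative) ring, let P ∈ R with P² = P, set Q := 1 − P, let n ≥ 0 be an integer, and let X₀, X₁, …, X_{n+1} ∈ R satisfy P X_j P = 0 for every j ∈ {0,…,n+1}. For a composition (k₁,…,k_r) of n+2 (i.e., k₁ + ⋯ + k_r = n+2) with every part k_j ≥ 2, set m₀ := 0 and m_j := k₁ + ⋯ + k_j, and define the block factors B_j := P X_{m_j − 1} X_{m_j − 2} ⋯ X_{m_{j−1}} P for j = 1, …, r. Then P X_{n+1} Q X_n Q ⋯ Q X₁ Q X₀ P = Σ over all compositions (k₁,…,k_r) of n+2 with all parts ≥ 2 of (−1)^{r+1} B_r B_{r−1} ⋯ B₁. -/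
namespace ProjAlt

variable {R : Type*} [Ring R]

/-- plain product `X_{off+k-1} ⋯ X_{off}` -/
def pr (X : ℕ → R) (off k : ℕ) : R := ((List.range' off k).reverse.map X).prod

/-- block factor `P X_{off+k-1} ⋯ X_{off} P` -/
def Ab (P : R) (X : ℕ → R) (off k : ℕ) : R := P * pr X off k * P

/-- product of block factors `B_r ⋯ B_1` for a composition (as a list of parts),
starting at index `off`. -/
def Bprod (P : R) (X : ℕ → R) : ℕ → List ℕ → R
  | _, [] => 1
  | off, k :: l => Bprod P X (off + k) l * Ab P X off k

/-- signed term of a composition -/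
def cterm (P : R) (X : ℕ → R) (off : ℕ) (l : List ℕ) : R :=
  (-1 : R) ^ (l.length + 1) * Bprod P X off l

/-- `E off N = P X_{off+N-1} Q X_{off+N-2} ⋯ Q X_off` (no trailing `P`). -/
def E (P : R) (X : ℕ → R) : ℕ → ℕ → R
  | _, 0 => P
  | off, 1 => P * X off
  | off, (N+2) => E P X (off+1) (N+1) * ((1 - P) * X off)

/-- coefficient in the cut expansion -/
def Cc (P : R) (X : ℕ → R) (o M : ℕ) : R := if M = 0 then P else -(E P X o M * P)

lemma pr_zero (X : ℕ → R) (off : ℕ) : pr X off 0 = 1 := by simp [pr]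

lemma pr_one (X : ℕ → R) (off : ℕ) : pr X off 1 = X off := by
  simp [pr, List.range'_succ]

lemma pr_succ (X : ℕ → R) (off k : ℕ) : pr X off (k+1) = pr X (off+1) k * X off := by
  simp [pr, List.range'_succ]

lemma Ab_one_eq_zero {P : R} {X : ℕ → R} (hX : ∀ j, P * X j * P = 0) (off : ℕ) :
    Ab P X off 1 = 0 := by
  rw [Ab, pr_one]; exact hX off

/-- the cut expansion of `E` -/
lemma Eexp (P : R) (X : ℕ → R) :
    ∀ N off, E P X off (N+1)
      = ∑ i ∈ Finset.range (N+1), Cc P X (off+i+1) (N-i) * pr X off (i+1) := by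
  intro N
  induction N with
  | zero =>
    intro off
    simp [E, Cc, pr_one]
  | succ N ih =>
    intro off
    have hE : E P X off (N+2) = E P X (off+1) (N+1) * ((1-P) * X off) := rfl
    have hsplit : E P X (off+1) (N+1) * ((1-P) * X off)
        = E P X (off+1) (N+1) * X off - E P X (off+1) (N+1) * P * X off := by
      rw [sub_mul, one_mul, mul_sub, mul_assoc]
    rw [hE, hsplit, sub_eq_add_neg,
      Finset.sum_range_succ' (fun i => Cc P X (off+i+1) (N+1-i) * pr X off (i+1)) (N+1)]
    congr 1
    · rw [ih (off+1), Finset.sum_mul]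
      refine Finset.sum_congr rfl fun i _ => ?_
      have h1 : off + 1 + i + 1 = off + (i+1) + 1 := by omega
      have h2 : N - i = N + 1 - (i+1) := by omega
      rw [mul_assoc, ← pr_succ, h1, h2]
    · simp [Cc, pr_one, mul_assoc]

/-- recursion for the projected alternating product, splitting off the bottom block -/
lemma Trec {P : R} (hP : P * P = P) (X : ℕ → R) (N off : ℕ) :
    E P X off (N+1) * P
      = Ab P X off (N+1)
        - ∑ i ∈ Finset.range N, (E P X (off+i+1) (N-i) * P) * Ab P X off (i+1) := by
  rw [Eexp P X N off, Finset.sum_mul, Finset.sum_range_succ]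
  have hlast : Cc P X (off+N+1) (N-N) * pr X off (N+1) * P = Ab P X off (N+1) := by
    simp [Cc, Ab]
  rw [hlast]
  have hterm : ∀ i ∈ Finset.range N,
      Cc P X (off+i+1) (N-i) * pr X off (i+1) * P
        = -((E P X (off+i+1) (N-i) * P) * Ab P X off (i+1)) := by
    intro i hi
    have hne : N - i ≠ 0 := by have := Finset.mem_range.1 hi; omega
    rw [Cc, if_neg hne, Ab]
    have : E P X (off+i+1) (N-i) * P * (P * pr X off (i+1) * P)
        = E P X (off+i+1) (N-i) * P * pr X off (i+1) * P := by
      rw [mul_assoc (E P X (off+i+1) (N-i)) P (P * pr X off (i+1) * P),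
        ← mul_assoc P (P * pr X off (i+1)) P, ← mul_assoc P P (pr X off (i+1)), hP,
        ← mul_assoc, ← mul_assoc]
    rw [this]
    simp [neg_mul]
  rw [Finset.sum_congr rfl hterm, Finset.sum_neg_distrib]
  abel

/-- compositions with all parts at least `2` -/
def Tset (M : ℕ) : Finset (Composition M) :=
  Finset.univ.filter (fun c => ∀ x ∈ c.blocks, 2 ≤ x)

/-- sum of signed block products over compositions with all parts `≥ 2` -/
def RHSsum (P : R) (X : ℕ → R) (M off : ℕ) : R :=
  ∑ c ∈ Tset M, cterm P X off c.blocks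

lemma comp_zero_blocks (c : Composition 0) : c.blocks = [] := by
  rcases hb : c.blocks with _ | ⟨k, l⟩
  · rfl
  · exfalso
    have h1 := c.blocks_pos (hb ▸ (List.mem_cons_self : k ∈ k :: l))
    have h2 := c.blocks_sum
    rw [hb] at h2
    simp [List.sum_cons] at h2
    omega

lemma cterm_nil (P : R) (X : ℕ → R) (off : ℕ) : cterm P X off [] = -1 := by
  simp [cterm, Bprod]

lemma RHSsum_zero (P : R) (X : ℕ → R) (off : ℕ) : RHSsum P X 0 off = -1 := by
  haveI : Unique (Composition 0) :=
    { default := ⟨[], by simp, rfl⟩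
      uniq := fun c => by
        ext1
        exact comp_zero_blocks c }
  rw [RHSsum, Tset, Finset.filter_true_of_mem (fun c _ => by
      rw [comp_zero_blocks c]; intro x hx; simp at hx),
    Finset.univ_unique, Finset.sum_singleton, comp_zero_blocks, cterm_nil]

/-- safe constructor for compositions from a list -/
def mkC (M : ℕ) (l : List ℕ) : Composition M :=
  if h : l.sum = M ∧ ∀ x ∈ l, 0 < x then ⟨l, fun hi => h.2 _ hi, h.1⟩ else default

lemma mkC_blocks {M : ℕ} {l : List ℕ} (h1 : l.sum = M) (h2 : ∀ x ∈ l, 0 < x) :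
    (mkC M l).blocks = l := by
  rw [mkC, dif_pos ⟨h1, h2⟩]

lemma mem_Tset (M : ℕ) (l : List ℕ) (h1 : l.sum = M) (h2 : ∀ x ∈ l, 2 ≤ x) :
    mkC M l ∈ Tset M := by
  rw [Tset, Finset.mem_filter]
  refine ⟨Finset.mem_univ _, ?_⟩
  rw [mkC_blocks h1 (fun x hx => by have := h2 x hx; omega)]
  exact h2

lemma Tset_key {N : ℕ} (c : Composition (N+1)) (hc : c ∈ Tset (N+1)) :
    c.blocks = c.blocks.headI :: c.blocks.tail ∧ 2 ≤ c.blocks.headI ∧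
      c.blocks.headI + c.blocks.tail.sum = N+1 ∧ ∀ x ∈ c.blocks.tail, 2 ≤ x := by
  rw [Tset, Finset.mem_filter] at hc
  rcases hb : c.blocks with _ | ⟨k, t⟩
  · exfalso
    have := c.blocks_sum
    rw [hb] at this
    simp at this
  · have hsum := c.blocks_sum
    rw [hb, List.sum_cons] at hsum
    refine ⟨by simp, ?_, by simpa using hsum, ?_⟩
    · simpa using hc.2 k (hb ▸ (List.mem_cons_self : k ∈ k :: t))
    · intro x hx
      simp only [List.tail_cons] at hx ⊢
      exact hc.2 x (hb ▸ List.mem_cons_of_mem k hx)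

/-- splitting off the first part of each composition -/
lemma Rsplit (P : R) (X : ℕ → R) (N off : ℕ) :
    RHSsum P X (N+1) off
      = ∑ k ∈ Finset.Icc 2 (N+1), ∑ c ∈ Tset (N+1-k), cterm P X off (k :: c.blocks) := by
  rw [RHSsum, ← Finset.sum_sigma (Finset.Icc 2 (N+1)) (fun k => Tset (N+1-k))
      (fun p => cterm P X off (p.1 :: p.2.blocks))]
  refine Finset.sum_nbij'
    (fun c => ⟨c.blocks.headI, mkC (N+1-c.blocks.headI) c.blocks.tail⟩)
    (fun p => mkC (N+1) (p.1 :: p.2.blocks)) ?_ ?_ ?_ ?_ ?_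
  · -- forward membership
    intro c hc
    obtain ⟨hcons, hk2, hksum, htail⟩ := Tset_key c hc
    rw [Finset.mem_sigma]
    refine ⟨?_, ?_⟩
    · show c.blocks.headI ∈ Finset.Icc 2 (N+1)
      rw [Finset.mem_Icc]
      omega
    · show mkC (N+1-c.blocks.headI) c.blocks.tail ∈ Tset (N+1-c.blocks.headI)
      exact mem_Tset _ _ (by omega) htail
  · -- backward membership
    rintro ⟨k, c2⟩ hp
    dsimp only
    rw [Finset.mem_sigma, Finset.mem_Icc] at hp
    dsimp only at hp
    rw [Tset, Finset.mem_filter]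
    refine ⟨Finset.mem_univ _, ?_⟩
    have hsum2 := c2.blocks_sum
    have hpos : ∀ x ∈ (k :: c2.blocks), 0 < x := by
      intro x hx
      rcases List.mem_cons.1 hx with h | h
      · omega
      · exact c2.blocks_pos h
    rw [mkC_blocks (by rw [List.sum_cons, hsum2]; omega) hpos]
    intro x hx
    rcases List.mem_cons.1 hx with h | h
    · omega
    · have hc2 := hp.2
      rw [Tset, Finset.mem_filter] at hc2
      exact hc2.2 x h
  · -- left inverse
    intro c hc
    dsimp only
    obtain ⟨hcons, hk2, hksum, htail⟩ := Tset_key c hc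
    have htpos : ∀ x ∈ c.blocks.tail, 0 < x := fun x hx => by have := htail x hx; omega
    ext1
    rw [mkC_blocks]
    · rw [mkC_blocks (by omega) htpos]
      exact hcons.symm
    · rw [mkC_blocks (by omega) htpos, List.sum_cons]
      omega
    · rw [mkC_blocks (by omega) htpos]
      intro x hx
      rcases List.mem_cons.1 hx with h | h
      · omega
      · exact htpos x h
  · -- right inverse
    rintro ⟨k, c2⟩ hp
    dsimp only
    rw [Finset.mem_sigma, Finset.mem_Icc] at hp
    dsimp only at hp
    have hc2 := hp.2
    rw [Tset, Finset.mem_filter] at hc2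
    have hsum2 := c2.blocks_sum
    have hpos : ∀ x ∈ (k :: c2.blocks), 0 < x := by
      intro x hx
      rcases List.mem_cons.1 hx with h | h
      · omega
      · exact c2.blocks_pos h
    have hbl : (mkC (N+1) (k :: c2.blocks)).blocks = k :: c2.blocks :=
      mkC_blocks (by rw [List.sum_cons, hsum2]; omega) hpos
    have hmk : mkC (N+1-k) c2.blocks = c2 := by
      ext1
      rw [mkC_blocks hsum2 (fun x hx => c2.blocks_pos hx)]
    refine Sigma.ext ?_ ?_
    · show (mkC (N+1) (k :: c2.blocks)).blocks.headI = k
      rw [hbl, List.headI_cons]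
    · show HEq (mkC (N+1-(mkC (N+1) (k :: c2.blocks)).blocks.headI)
        (mkC (N+1) (k :: c2.blocks)).blocks.tail) c2
      rw [hbl, List.headI_cons, List.tail_cons, hmk]
  · -- values agree
    intro c hc
    dsimp only
    obtain ⟨hcons, hk2, hksum, htail⟩ := Tset_key c hc
    have htpos : ∀ x ∈ c.blocks.tail, 0 < x := fun x hx => by have := htail x hx; omega
    simp only [mkC_blocks (show c.blocks.tail.sum = N+1-c.blocks.headI by omega) htpos]
    rw [← hcons]

lemma cterm_cons (P : R) (X : ℕ → R) (off k : ℕ) (l : List ℕ) :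
    cterm P X off (k :: l) = -(cterm P X (off+k) l * Ab P X off k) := by
  simp only [cterm, Bprod, List.length_cons, pow_succ, mul_assoc, mul_neg_one, neg_mul,
    neg_neg, mul_one]

/-- recursion for the composition sum, matching `Trec` -/
lemma Rrec {P : R} (X : ℕ → R) (hX : ∀ j, P * X j * P = 0) (N off : ℕ) :
    RHSsum P X (N+1) off
      = Ab P X off (N+1)
        - ∑ i ∈ Finset.range N, RHSsum P X (N-i) (off+i+1) * Ab P X off (i+1) := by
  rw [Rsplit]
  have hinner : ∀ k ∈ Finset.Icc 2 (N+1),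
      (∑ c ∈ Tset (N+1-k), cterm P X off (k :: c.blocks))
        = -(RHSsum P X (N+1-k) (off+k) * Ab P X off k) := by
    intro k _
    rw [RHSsum, Finset.sum_mul, ← Finset.sum_neg_distrib]
    exact Finset.sum_congr rfl fun c _ => cterm_cons P X off k c.blocks
  rw [Finset.sum_congr rfl hinner, Finset.sum_neg_distrib]
  have hIcc : ∀ (f : ℕ → R), ∑ k ∈ Finset.Icc 2 (N+1), f k
      = ∑ i ∈ Finset.range N, f (i+2) := by
    intro f
    rw [← Finset.Ico_add_one_right_eq_Icc, Finset.sum_Ico_eq_sum_range]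
    refine Finset.sum_congr (by congr 1) fun i _ => by rw [Nat.add_comm 2 i]
  rw [hIcc]
  cases N with
  | zero =>
    simp [Ab_one_eq_zero hX]
  | succ M =>
    have h0 : RHSsum P X (M+1-0) (off+0+1) * Ab P X off (0+1) = 0 := by
      rw [Ab_one_eq_zero hX, mul_zero]
    have hlast : RHSsum P X (M+1+1-(M+2)) (off+(M+2)) * Ab P X off (M+2)
        = -(Ab P X off (M+2)) := by
      rw [show M+1+1-(M+2) = 0 from by omega, RHSsum_zero, neg_one_mul]
    have hmid : ∀ i, RHSsum P X (M+1+1-(i+2)) (off+(i+2)) * Ab P X off (i+2)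
        = RHSsum P X (M+1-(i+1)) (off+(i+1)+1) * Ab P X off ((i+1)+1) := by
      intro i
      rw [show M+1+1-(i+2) = M+1-(i+1) from by omega]
      rfl
    rw [Finset.sum_range_succ
        (fun i => RHSsum P X (M+1+1-(i+2)) (off+(i+2)) * Ab P X off (i+2)) M,
      Finset.sum_range_succ'
        (fun i => RHSsum P X (M+1-i) (off+i+1) * Ab P X off (i+1)) M,
      h0, hlast,
      Finset.sum_congr rfl (fun i _ => hmid i)]
    abel

/-- the heart of the argument: the projected alternating product equals the composition sum -/
lemma main {P : R} (hP : P * P = P) (X : ℕ → R) (hX : ∀ j, P * X j * P = 0) :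
    ∀ N off, E P X off (N+1) * P = RHSsum P X (N+1) off := by
  intro N
  induction N using Nat.strong_induction_on with
  | _ N ih =>
    intro off
    rw [Trec hP X N off, Rrec X hX N off]
    congr 1
    refine Finset.sum_congr rfl fun i hi => ?_
    have hiN := Finset.mem_range.1 hi
    have hrw : N - i = (N - i - 1) + 1 := by omega
    rw [hrw, ih (N-i-1) (by omega) (off+i+1)]

/-- `E` as the explicit product appearing in the theorem -/
lemma Eprod (P : R) (X : ℕ → R) :
    ∀ N off, E P X off (N+1)
      = P * X (off+N) * ((List.range' off N).reverse.map fun j => (1-P) * X j).prod := by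
  intro N
  induction N with
  | zero =>
    intro off
    simp [E]
  | succ N ih =>
    intro off
    have hE : E P X off (N+2) = E P X (off+1) (N+1) * ((1-P) * X off) := rfl
    rw [hE, ih (off+1), List.range'_succ, List.reverse_cons, List.map_append,
      List.prod_append]
    simp only [mul_assoc, List.map_cons, List.map_nil, List.prod_cons, List.prod_nil, mul_one]
    rw [show off + 1 + N = off + (N + 1) from by omega]

/-- the `ofFn` product over blocks equals `Bprod` -/
lemma ofFn_eq_Bprod (P : R) (X : ℕ → R) :
    ∀ (l : List ℕ) (off),
      (List.ofFn (fun j : Fin l.length =>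
        Ab P X (off + (l.take j).sum) (l.get j))).reverse.prod = Bprod P X off l := by
  intro l
  induction l with
  | nil =>
    intro off
    simp [Bprod]
  | cons k l ih =>
    intro off
    rw [List.ofFn_succ, List.reverse_cons, List.prod_append]
    have hfun : (fun j : Fin l.length =>
        Ab P X (off + ((k :: l).take (Fin.succ j)).sum) ((k :: l).get (Fin.succ j)))
        = fun j : Fin l.length => Ab P X ((off + k) + (l.take j).sum) (l.get j) := by
      funext j
      rcases j with ⟨jv, hj⟩
      show Ab P X (off + ((k :: l).take (jv+1)).sum) (l.get ⟨jv, hj⟩)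
        = Ab P X ((off + k) + (l.take jv).sum) (l.get ⟨jv, hj⟩)
      rw [List.take_succ_cons, List.sum_cons]
      congr 1
      omega
    rw [show ((k :: l).take (0 : Fin (l.length+1)).val).sum = 0 by simp]
    rw [show (k :: l).get (0 : Fin (l.length+1)) = k from rfl]
    rw [hfun, ih (off+k)]
    simp [Bprod]

end ProjAlt

/-- The combinatorial operator identity over noncrossing contiguous partitions: in a ring `R`,
if `P² = P`, `Q := 1 − P`, and `P X_j P = 0` for `j = 0,…,n+1`, then
`P X_{n+1} Q X_n Q ⋯ Q X₁ Q X₀ P` equals the sum, over all compositions `(k₁,…,k_r)` of `n+2`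
with all parts `≥ 2`, of `(−1)^{r+1} B_r ⋯ B₁`, where `B_j = P X_{m_j−1} ⋯ X_{m_{j−1}} P`
and `m_j = k₁ + ⋯ + k_j`. -/
theorem proj_alternating_prod_eq_sum_compositions
    (R : Type*) [Ring R] (P : R) (hP : P * P = P) (n : ℕ)
    (X : ℕ → R) (hX : ∀ j ≤ n + 1, P * X j * P = 0) :
    P * X (n + 1) * (((List.range (n + 1)).reverse.map fun j => (1 - P) * X j).prod) * P
      = ∑ c ∈ Finset.univ.filter
          (fun c : Composition (n + 2) => ∀ x ∈ c.blocks, 2 ≤ x),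
          (-1 : R) ^ (c.length + 1) *
            ((List.ofFn fun j : Fin c.length =>
                P * (((List.range' (c.sizeUpTo j) (c.blocksFun j)).reverse.map X).prod) * P).reverse.prod) := by
  classical
  set X' : ℕ → R := fun j => if j ≤ n+1 then X j else 0 with hX'def
  have hX'0 : ∀ j, P * X' j * P = 0 := by
    intro j
    by_cases h : j ≤ n+1
    · simpa [X', h] using hX j h
    · simp [X', h]
  have hmain := ProjAlt.main hP X' hX'0 (n+1) 0
  rw [ProjAlt.Eprod P X' (n+1) 0] at hmain
  have h1 : X' (0+(n+1)) = X (n+1) := by simp [X']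
  have h2 : ((List.range' 0 (n+1)).reverse.map fun j => (1-P) * X' j)
      = ((List.range (n+1)).reverse.map fun j => (1-P) * X j) := by
    rw [← List.range_eq_range']
    refine List.map_congr_left fun j hj => ?_
    have hj' : j ≤ n := by
      have := List.mem_range.1 (List.mem_reverse.1 hj)
      omega
    have : j ≤ n + 1 := by omega
    simp [X', this]
  rw [h1, h2] at hmain
  rw [hmain]
  simp only [ProjAlt.RHSsum, ProjAlt.Tset]
  refine Finset.sum_congr rfl fun c hc => ?_
  have h : (fun j : Fin c.length =>
        P * (((List.range' (c.sizeUpTo j) (c.blocksFun j)).reverse.map X).prod) * P)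
      = (fun j : Fin c.blocks.length =>
        ProjAlt.Ab P X' (0 + (c.blocks.take (j : ℕ)).sum) (c.blocks.get j)) := by
    funext j
    have hidx : (0 + (c.blocks.take (j : ℕ)).sum) = c.sizeUpTo (j : ℕ) := by
      rw [zero_add]
      rfl
    rw [ProjAlt.Ab, ProjAlt.pr, hidx]
    have hmem : ∀ a ∈ (List.range' (c.sizeUpTo (j : ℕ)) (c.blocksFun j)).reverse, X a = X' a := by
      intro a ha
      rw [List.mem_reverse] at ha
      have hr := List.mem_range'_1.1 ha
      have hle : c.sizeUpTo (j : ℕ) + c.blocksFun j ≤ n+2 := by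
        rw [← Composition.sizeUpTo_succ' c j]
        exact Composition.sizeUpTo_le c _
      have haj : a ≤ n + 1 := by omega
      simp [X', haj]
    rw [List.map_congr_left hmem]
    rfl
  rw [ProjAlt.cterm]
  exact congrArg (fun y => (-1:R)^(c.length+1) * y)
    ((congrArg (fun f => (List.ofFn f).reverse.prod) h).trans
      (ProjAlt.ofFn_eq_Bprod P X' c.blocks 0)).symm
end

section
/- Under the listed hypotheses, set K := ∫₀^∞ F(s) ds (Bochner integral in B(B)). Then for all 0 < τ₀ < τ₁, lim_{λ→0, λ≠0} sup_{τ∈[τ₀,τ₁]} ‖K^λ(τ) − K‖ = 0. -/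
open MeasureTheory

set_option maxHeartbeats 1000000 in
/-- Step 1 of the proof of Davies' theorem (and statement (5.2) of the main Theorem 5.1):
with `F : [0,∞) → B(B)` Bochner integrable, `K := ∫₀^∞ F(s) ds`, continuous `K_n` satisfying
`‖K_n(t)‖ ≤ c_n t^{[n/2]}` (with `Σ c_n s^n` of infinite radius of convergence) and
`‖K_{2m}(t)‖ ≤ d_m t^{m−ε}`, the memory kernel
`K^λ(τ) = ∫₀^{τ/λ²} F + Σ_{n≥1} (−iλ)^n K_n(τ/λ²)` converges to `K` as `λ → 0`,
uniformly on `[τ₀, τ₁]` for all `0 < τ₀ < τ₁`. -/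
theorem memory_kernel_tendsto_K
    (B : Type*) [NormedAddCommGroup B] [NormedSpace ℂ B] [CompleteSpace B]
    (F : ℝ → B →L[ℂ] B) (hF : IntegrableOn F (Set.Ici 0))
    (K : B →L[ℂ] B) (hK : K = ∫ s in Set.Ici (0:ℝ), F s)
    (Kn : ℕ → ℝ → B →L[ℂ] B) (hKncont : ∀ n, 1 ≤ n → ContinuousOn (Kn n) (Set.Ici 0))
    (c : ℕ → ℝ) (hc0 : ∀ n, 0 ≤ c n)
    (hcconv : ∀ s : ℝ, 0 ≤ s → Summable fun n : ℕ => c (n + 1) * s ^ (n + 1))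
    (hKnbound : ∀ n, 1 ≤ n → ∀ t : ℝ, 0 ≤ t → ‖Kn n t‖ ≤ c n * t ^ (n / 2))
    (ε : ℝ) (hε : 0 < ε) (d : ℕ → ℝ) (hd0 : ∀ m, 0 ≤ d m)
    (hKnevenbound : ∀ m, 1 ≤ m → ∀ t : ℝ, 0 < t →
      ‖Kn (2 * m) t‖ ≤ d m * t ^ ((m : ℝ) - ε))
    (Kl : ℝ → ℝ → B →L[ℂ] B)
    (hKl : ∀ lam : ℝ, lam ≠ 0 → ∀ τ : ℝ,
      Kl lam τ = (∫ s in (0:ℝ)..(τ / lam ^ 2), F s) +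
        ∑' n : ℕ, (-(Complex.I * (lam : ℂ))) ^ (n + 1) • Kn (n + 1) (τ / lam ^ 2))
    (τ₀ τ₁ : ℝ) (hτ₀ : 0 < τ₀) (hτ₀₁ : τ₀ < τ₁) :
    ∀ e : ℝ, 0 < e → ∃ δ : ℝ, 0 < δ ∧ ∀ lam : ℝ, lam ≠ 0 → |lam| < δ →
      ∀ τ ∈ Set.Icc τ₀ τ₁, ‖Kl lam τ - K‖ < e := by
  intro e he
  have hτ₁0 : 0 < τ₁ := hτ₀.trans hτ₀₁
  -- auxiliary constants
  set τ' : ℝ := max τ₁ 1 with hτ'def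
  have hτ'1 : (1:ℝ) ≤ τ' := le_max_right _ _
  have hτ'0 : (0:ℝ) < τ' := lt_of_lt_of_le one_pos hτ'1
  set s₁ : ℝ := max (Real.sqrt τ₁) 1 with hs₁def
  have hs₁1 : (1:ℝ) ≤ s₁ := le_max_right _ _
  have hs₁0 : (0:ℝ) ≤ s₁ := by linarith
  have hτs : τ₁ ≤ s₁ ^ 2 := by
    have h1 : Real.sqrt τ₁ ≤ s₁ := le_max_left _ _
    have h2 := Real.sq_sqrt hτ₁0.le
    nlinarith [Real.sqrt_nonneg τ₁]
  have hu : Summable (fun n : ℕ => c (n + 1) * s₁ ^ (n + 1)) := hcconv s₁ hs₁0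
  -- choose N controlling the tail of the series
  obtain ⟨N, hN⟩ : ∃ N : ℕ, ∑' n : ℕ, c (n + N + 1) * s₁ ^ (n + N + 1) < e / 3 := by
    have h := tendsto_sum_nat_add (f := fun n : ℕ => c (n + 1) * s₁ ^ (n + 1))
    obtain ⟨N, hN⟩ := Metric.tendsto_atTop.mp h (e / 3) (by linarith)
    refine ⟨N, ?_⟩
    have h2 := hN N le_rfl
    rw [Real.dist_eq, sub_zero] at h2
    exact lt_of_le_of_lt (le_abs_self _) h2
  -- choose T₀ controlling the integral
  obtain ⟨T₀, hT₀⟩ : ∃ T₀ : ℝ, ∀ T ≥ T₀, ‖(∫ s in (0:ℝ)..T, F s) - K‖ < e / 3 := by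
    have hF' : IntegrableOn F (Set.Ioi (0:ℝ)) := hF.mono_set Set.Ioi_subset_Ici_self
    have h := MeasureTheory.intervalIntegral_tendsto_integral_Ioi (0:ℝ) hF'
      (Filter.tendsto_id (α := ℝ))
    have hKeq : K = ∫ s in Set.Ioi (0:ℝ), F s := by
      rw [hK, MeasureTheory.integral_Ici_eq_integral_Ioi]
    rw [← hKeq] at h
    obtain ⟨T₀, hT₀⟩ := Metric.tendsto_atTop.mp h (e / 3) (by linarith)
    exact ⟨T₀, fun T hT => by simpa [dist_eq_norm] using hT₀ T hT⟩
  -- the exponent ρ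
  set ρ : ℝ := min 1 (2 * ε) with hρdef
  have hρ0 : 0 < ρ := lt_min one_pos (by linarith)
  have hρ1 : ρ ≤ 1 := min_le_left _ _
  have hρε : ρ ≤ 2 * ε := min_le_right _ _
  -- head constants
  set C : ℕ → ℝ := fun n => c (n + 1) * τ' ^ (n + 1) +
      d ((n + 1) / 2) * τ' ^ (n + 1) / τ₀ ^ ε with hCdef
  have hC0 : ∀ n, 0 ≤ C n := by
    intro n
    simp only [hCdef]
    exact add_nonneg (mul_nonneg (hc0 _) (pow_nonneg hτ'0.le _))
      (div_nonneg (mul_nonneg (hd0 _) (pow_nonneg hτ'0.le _)) (Real.rpow_nonneg hτ₀.le ε))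
  set Cs : ℝ := ∑ n ∈ Finset.range N, C n with hCsdef
  have hCs0 : 0 ≤ Cs := Finset.sum_nonneg fun n _ => hC0 n
  -- choice of δ
  set x : ℝ := (e / 3) / (Cs + 1) with hxdef
  have hx0 : 0 < x := by positivity
  set δ₂ : ℝ := min 1 (x ^ (1 / ρ)) with hδ₂def
  have hδ₂0 : 0 < δ₂ := lt_min one_pos (Real.rpow_pos_of_pos hx0 _)
  have hδ₂1 : δ₂ ≤ 1 := min_le_left _ _
  have hδ₂x : δ₂ ^ ρ ≤ x := by
    calc δ₂ ^ ρ ≤ (x ^ (1 / ρ)) ^ ρ :=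
          Real.rpow_le_rpow hδ₂0.le (min_le_right _ _) hρ0.le
      _ = x ^ ((1 / ρ) * ρ) := by rw [← Real.rpow_mul hx0.le]
      _ = x := by rw [one_div_mul_cancel hρ0.ne', Real.rpow_one]
  set T' : ℝ := max T₀ 1 with hT'def
  have hT'0 : (0:ℝ) < T' := lt_of_lt_of_le one_pos (le_max_right _ _)
  set δ₃ : ℝ := Real.sqrt (τ₀ / T') with hδ₃def
  have hδ₃0 : 0 < δ₃ := Real.sqrt_pos.mpr (div_pos hτ₀ hT'0)
  refine ⟨min δ₂ δ₃, lt_min hδ₂0 hδ₃0, ?_⟩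
  intro lam hlam hlamlt τ hτ
  obtain ⟨hτl, hτu⟩ := hτ
  have hτ0' : 0 < τ := lt_of_lt_of_le hτ₀ hτl
  have hlam2 : (0:ℝ) < lam ^ 2 := by positivity
  have habs : (0:ℝ) < |lam| := abs_pos.mpr hlam
  have hlamδ₂ : |lam| < δ₂ := lt_of_lt_of_le hlamlt (min_le_left _ _)
  have hlamδ₃ : |lam| < δ₃ := lt_of_lt_of_le hlamlt (min_le_right _ _)
  have hlam1 : |lam| ≤ 1 := le_of_lt (lt_of_lt_of_le hlamδ₂ hδ₂1)
  set t : ℝ := τ / lam ^ 2 with htdef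
  have ht0 : 0 < t := div_pos hτ0' hlam2
  have hlamt : lam ^ 2 * t = τ := by
    rw [htdef]; field_simp
  -- the terms of the series
  set f : ℕ → B →L[ℂ] B :=
    fun n => (-(Complex.I * (lam : ℂ))) ^ (n + 1) • Kn (n + 1) t with hfdef
  have hfnorm : ∀ n : ℕ, ‖f n‖ = |lam| ^ (n + 1) * ‖Kn (n + 1) t‖ := by
    intro n
    rw [hfdef]
    rw [norm_smul ((-(Complex.I * (lam:ℂ))) ^ (n + 1)) (Kn (n + 1) t), norm_pow, norm_neg,
      norm_mul, Complex.norm_I, one_mul, Complex.norm_real, Real.norm_eq_abs]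
  -- claim A : uniform bound on the terms
  have hA : ∀ n : ℕ, |lam| ^ (n + 1) * t ^ ((n + 1) / 2) ≤ s₁ ^ (n + 1) := by
    intro n
    set k : ℕ := (n + 1) / 2 with hkdef
    have h2k : 2 * k ≤ n + 1 := by
      have := Nat.div_mul_le_self (n + 1) 2
      omega
    have hsplit : |lam| ^ (n + 1) = |lam| ^ (n + 1 - 2 * k) * (|lam| ^ 2) ^ k := by
      rw [← pow_mul, ← pow_add]
      congr 1
      omega
    have hlt : (|lam| ^ 2) ^ k * t ^ k = τ ^ k := by
      rw [← mul_pow, sq_abs, hlamt]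
    have h1 : |lam| ^ (n + 1 - 2 * k) ≤ 1 := pow_le_one₀ (abs_nonneg _) hlam1
    have h2 : τ ^ k ≤ s₁ ^ (n + 1) := by
      calc τ ^ k ≤ (s₁ ^ 2) ^ k :=
            pow_le_pow_left₀ hτ0'.le (le_trans hτu hτs) k
        _ = s₁ ^ (2 * k) := by rw [← pow_mul, mul_comm]
        _ ≤ s₁ ^ (n + 1) := pow_le_pow_right₀ hs₁1 h2k
    calc |lam| ^ (n + 1) * t ^ k
        = |lam| ^ (n + 1 - 2 * k) * ((|lam| ^ 2) ^ k * t ^ k) := by rw [hsplit]; ring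
      _ = |lam| ^ (n + 1 - 2 * k) * τ ^ k := by rw [hlt]
      _ ≤ 1 * s₁ ^ (n + 1) := by
          exact mul_le_mul h1 h2 (pow_nonneg hτ0'.le k) zero_le_one
      _ = s₁ ^ (n + 1) := one_mul _
  have hbound : ∀ n : ℕ, ‖f n‖ ≤ c (n + 1) * s₁ ^ (n + 1) := by
    intro n
    rw [hfnorm n]
    calc |lam| ^ (n + 1) * ‖Kn (n + 1) t‖
        ≤ |lam| ^ (n + 1) * (c (n + 1) * t ^ ((n + 1) / 2)) := by
          exact mul_le_mul_of_nonneg_left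
            (hKnbound (n + 1) (Nat.le_add_left 1 n) t ht0.le)
            (pow_nonneg (abs_nonneg _) _)
      _ = c (n + 1) * (|lam| ^ (n + 1) * t ^ ((n + 1) / 2)) := by ring
      _ ≤ c (n + 1) * s₁ ^ (n + 1) := mul_le_mul_of_nonneg_left (hA n) (hc0 _)
  have hfs : Summable fun n => ‖f n‖ :=
    Summable.of_nonneg_of_le (fun n => norm_nonneg _) hbound hu
  -- head bound
  have hlamρ1 : |lam| ^ (1:ℝ) ≤ |lam| ^ ρ :=
    Real.rpow_le_rpow_of_exponent_ge habs hlam1 hρ1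
  have hlamρε : |lam| ^ (2 * ε) ≤ |lam| ^ ρ :=
    Real.rpow_le_rpow_of_exponent_ge habs hlam1 hρε
  have hlamρ0 : (0:ℝ) ≤ |lam| ^ ρ := Real.rpow_nonneg (abs_nonneg _) _
  have hhead : ∀ n : ℕ, ‖f n‖ ≤ C n * |lam| ^ ρ := by
    intro n
    rcases Nat.even_or_odd n with hpar | hpar
    · -- n even : n + 1 = 2k + 1 odd
      obtain ⟨j, hj⟩ := hpar
      set k : ℕ := (n + 1) / 2 with hkdef
      have hk : n + 1 = 2 * k + 1 := by omega
      have hτ'm : τ ^ k ≤ τ' ^ (n + 1) := by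
        calc τ ^ k ≤ τ' ^ k :=
              pow_le_pow_left₀ hτ0'.le (le_trans hτu (le_max_left _ _)) k
          _ ≤ τ' ^ (n + 1) := pow_le_pow_right₀ hτ'1 (by omega)
      have hcalc : |lam| ^ (n + 1) * t ^ k = |lam| * τ ^ k := by
        calc |lam| ^ (n + 1) * t ^ k = |lam| * ((|lam| ^ 2) ^ k * t ^ k) := by
              rw [hk]; ring
          _ = |lam| * τ ^ k := by rw [← mul_pow, sq_abs, hlamt]
      rw [hfnorm n]
      calc |lam| ^ (n + 1) * ‖Kn (n + 1) t‖
          ≤ |lam| ^ (n + 1) * (c (n + 1) * t ^ ((n + 1) / 2)) :=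
            mul_le_mul_of_nonneg_left
              (hKnbound (n + 1) (Nat.le_add_left 1 n) t ht0.le)
              (pow_nonneg (abs_nonneg _) _)
        _ = c (n + 1) * (|lam| ^ (n + 1) * t ^ k) := by rw [← hkdef]; ring
        _ = c (n + 1) * (|lam| * τ ^ k) := by rw [hcalc]
        _ = c (n + 1) * τ ^ k * |lam| := by ring
        _ ≤ c (n + 1) * τ' ^ (n + 1) * |lam| :=
            mul_le_mul_of_nonneg_right
              (mul_le_mul_of_nonneg_left hτ'm (hc0 (n + 1))) (abs_nonneg _)
        _ ≤ c (n + 1) * τ' ^ (n + 1) * |lam| ^ ρ := by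
            have h2 : |lam| ≤ |lam| ^ ρ :=
              le_trans (le_of_eq (Real.rpow_one |lam|).symm) hlamρ1
            exact mul_le_mul_of_nonneg_left h2
              (mul_nonneg (hc0 _) (pow_nonneg hτ'0.le _))
        _ ≤ C n * |lam| ^ ρ := by
            apply mul_le_mul_of_nonneg_right _ hlamρ0
            simp only [hCdef]
            have h9 : 0 ≤ d ((n + 1) / 2) * τ' ^ (n + 1) / τ₀ ^ ε :=
              div_nonneg (mul_nonneg (hd0 _) (pow_nonneg hτ'0.le _))
                (Real.rpow_nonneg hτ₀.le ε)
            linarith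
    · -- n odd : n + 1 = 2m
      obtain ⟨j, hj⟩ := hpar
      set m : ℕ := (n + 1) / 2 with hmdef
      have hm : n + 1 = 2 * m := by omega
      have hm1 : 1 ≤ m := by omega
      have hKnb := hKnevenbound m hm1 t ht0
      have hlam2ε : (0:ℝ) < |lam| ^ (2 * ε) := Real.rpow_pos_of_pos habs _
      have hτε : (0:ℝ) < τ₀ ^ ε := Real.rpow_pos_of_pos hτ₀ _
      have htε : (0:ℝ) < t ^ ε := Real.rpow_pos_of_pos ht0 _
      -- t ^ ((m:ℝ) - ε) = t ^ m / t ^ ε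
      have hts : t ^ ((m:ℝ) - ε) = t ^ m / t ^ ε := by
        rw [Real.rpow_sub ht0, Real.rpow_natCast]
      -- |lam| ^ (2m) * t ^ m = τ ^ m
      have hpow : |lam| ^ (n + 1) * t ^ m = τ ^ m := by
        rw [hm, pow_mul, sq_abs, ← mul_pow, hlamt]
      -- lower bound on t ^ ε
      have htlow : τ₀ ^ ε / |lam| ^ (2 * ε) ≤ t ^ ε := by
        have h1 : τ₀ / lam ^ 2 ≤ t := by
          rw [htdef]
          exact div_le_div_of_nonneg_right hτl hlam2.le
        have h2 : (τ₀ / lam ^ 2) ^ ε ≤ t ^ ε :=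
          Real.rpow_le_rpow (by positivity) h1 hε.le
        have h3 : (τ₀ / lam ^ 2) ^ ε = τ₀ ^ ε / |lam| ^ (2 * ε) := by
          rw [Real.div_rpow hτ₀.le hlam2.le]
          congr 1
          rw [← sq_abs, ← Real.rpow_natCast (|lam|) 2, ← Real.rpow_mul (abs_nonneg _)]
          norm_num
        rw [← h3]; exact h2
      rw [hfnorm n]
      calc |lam| ^ (n + 1) * ‖Kn (n + 1) t‖
          ≤ |lam| ^ (n + 1) * (d m * t ^ ((m:ℝ) - ε)) := by
            apply mul_le_mul_of_nonneg_left _ (pow_nonneg (abs_nonneg _) _)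
            rw [hm]; exact hKnb
        _ = d m * (|lam| ^ (n + 1) * t ^ m) / t ^ ε := by rw [hts]; ring
        _ = d m * τ ^ m / t ^ ε := by rw [hpow]
        _ ≤ d m * τ ^ m / (τ₀ ^ ε / |lam| ^ (2 * ε)) :=
            div_le_div_of_nonneg_left (mul_nonneg (hd0 m) (pow_nonneg hτ0'.le m))
              (div_pos hτε hlam2ε) htlow
        _ = d m * τ ^ m / τ₀ ^ ε * |lam| ^ (2 * ε) := by
            field_simp
        _ ≤ d m * τ' ^ (n + 1) / τ₀ ^ ε * |lam| ^ ρ := by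
            apply mul_le_mul _ hlamρε (le_of_lt hlam2ε)
              (div_nonneg (mul_nonneg (hd0 m) (pow_nonneg hτ'0.le _))
                (Real.rpow_nonneg hτ₀.le ε))
            apply div_le_div_of_nonneg_right _ hτε.le
            apply mul_le_mul_of_nonneg_left _ (hd0 m)
            calc τ ^ m ≤ τ' ^ m :=
                  pow_le_pow_left₀ hτ0'.le (le_trans hτu (le_max_left _ _)) m
              _ ≤ τ' ^ (n + 1) := pow_le_pow_right₀ hτ'1 (by omega)
        _ ≤ C n * |lam| ^ ρ := by
            apply mul_le_mul_of_nonneg_right _ hlamρ0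
            simp only [hCdef]
            have hm2 : (n + 1) / 2 = m := hmdef.symm
            have h9 : 0 ≤ c (n + 1) * τ' ^ (n + 1) :=
              mul_nonneg (hc0 _) (pow_nonneg hτ'0.le _)
            rw [hm2]
            linarith
  -- tail estimate
  have hfsN : Summable fun n => ‖f (n + N)‖ := (summable_nat_add_iff N).mpr hfs
  have huN : Summable fun n : ℕ => c (n + N + 1) * s₁ ^ (n + N + 1) := by
    have := (summable_nat_add_iff (f := fun n : ℕ => c (n + 1) * s₁ ^ (n + 1)) N).mpr hu
    exact this
  have htail : ∑' n : ℕ, ‖f (n + N)‖ < e / 3 := by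
    calc ∑' n : ℕ, ‖f (n + N)‖ ≤ ∑' n : ℕ, c (n + N + 1) * s₁ ^ (n + N + 1) := by
          apply Summable.tsum_le_tsum _ hfsN huN
          intro n
          simpa [add_assoc] using hbound (n + N)
      _ < e / 3 := hN
  -- head sum estimate
  have hheadsum : ∑ n ∈ Finset.range N, ‖f n‖ < e / 3 := by
    calc ∑ n ∈ Finset.range N, ‖f n‖ ≤ ∑ n ∈ Finset.range N, C n * |lam| ^ ρ :=
          Finset.sum_le_sum fun n _ => hhead n
      _ = Cs * |lam| ^ ρ := by rw [hCsdef, ← Finset.sum_mul]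
      _ ≤ Cs * x := by
          apply mul_le_mul_of_nonneg_left _ hCs0
          calc |lam| ^ ρ ≤ δ₂ ^ ρ :=
                Real.rpow_le_rpow (abs_nonneg _) hlamδ₂.le hρ0.le
            _ ≤ x := hδ₂x
      _ < e / 3 := by
          have h1 : Cs * x = (e / 3) * (Cs / (Cs + 1)) := by rw [hxdef]; ring
          have h2 : Cs / (Cs + 1) < 1 := by
            rw [div_lt_one (by linarith)]; linarith
          have h3 : 0 ≤ Cs / (Cs + 1) := div_nonneg hCs0 (by linarith)
          rw [h1]
          nlinarith
  -- series estimate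
  have hseries : ‖∑' n : ℕ, f n‖ < e / 3 + e / 3 := by
    calc ‖∑' n : ℕ, f n‖ ≤ ∑' n : ℕ, ‖f n‖ := norm_tsum_le_tsum_norm hfs
      _ = ∑ n ∈ Finset.range N, ‖f n‖ + ∑' n : ℕ, ‖f (n + N)‖ :=
          (Summable.sum_add_tsum_nat_add N hfs).symm
      _ < e / 3 + e / 3 := add_lt_add hheadsum htail
  -- integral estimate
  have hint : ‖(∫ s in (0:ℝ)..t, F s) - K‖ < e / 3 := by
    apply hT₀
    have hδ₃2 : lam ^ 2 < τ₀ / T' := by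
      have h1 : |lam| ^ 2 < δ₃ ^ 2 := by
        apply pow_lt_pow_left₀ hlamδ₃ (abs_nonneg _)
        norm_num
      rw [hδ₃def, Real.sq_sqrt (div_pos hτ₀ hT'0).le] at h1
      rwa [sq_abs] at h1
    have h2 : T' ≤ t := by
      rw [htdef, le_div_iff₀ hlam2]
      calc T' * lam ^ 2 ≤ (τ₀ / T') * T' := by
            nlinarith
        _ = τ₀ := by field_simp
        _ ≤ τ := hτl
    exact le_trans (le_max_left _ _) h2
  -- assemble
  have hdecomp : Kl lam τ - K = ((∫ s in (0:ℝ)..t, F s) - K) + ∑' n : ℕ, f n := by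
    rw [hKl lam hlam τ, hfdef, htdef]
    abel
  rw [hdecomp]
  calc ‖((∫ s in (0:ℝ)..t, F s) - K) + ∑' n : ℕ, f n‖
      ≤ ‖(∫ s in (0:ℝ)..t, F s) - K‖ + ‖∑' n : ℕ, f n‖ := norm_add_le _ _
    _ < e / 3 + (e / 3 + e / 3) := add_lt_add hint hseries
    _ = e := by ring
end

section
/- Under the listed hypotheses, set K♮ := Σ_α Q_α ∘ K ∘ Q_α. Then for every continuous function σ : [0,τ₁] → B, lim_{λ→0, λ≠0} sup_{τ∈[0,τ₁]} ‖∫₀^τ E(−u/λ²) ∘ K^λ(τ−u) ∘ E(u/λ²) (σ(u)) du − ∫₀^τ K♮(σ(u)) du‖ = 0. -/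
open MeasureTheory intervalIntegral

lemma osc_aux {B : Type*} [NormedAddCommGroup B] [NormedSpace ℂ B] [CompleteSpace B]
    (v : ℝ → B) (hv : Continuous v) (S : ℝ) (hS : ∀ u, ‖v u‖ ≤ S)
    (τ₁ : ℝ) (hτ₁ : 0 < τ₁) (θ : ℝ) (hθ : θ ≠ 0) (e : ℝ) (he : 0 < e) :
    ∃ δ : ℝ, 0 < δ ∧ ∀ lam : ℝ, lam ≠ 0 → |lam| < δ → ∀ τ ∈ Set.Icc (0:ℝ) τ₁,
      ‖∫ u in (0:ℝ)..τ, Complex.exp (Complex.I * ((θ:ℂ) * (u:ℂ) / (lam:ℂ)^2)) • v u‖ < e := by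
  have hS0 : 0 ≤ S := (norm_nonneg _).trans (hS 0)
  set ε₂ : ℝ := e / (τ₁ + 1) with hε₂def
  have hε₂ : 0 < ε₂ := by positivity
  obtain ⟨η, hη, hηs⟩ := Metric.uniformContinuousOn_iff.mp
    ((isCompact_Icc (a := (-1:ℝ)) (b := τ₁+1)).uniformContinuousOn_of_continuous
      hv.continuousOn) ε₂ hε₂
  set r : ℝ := min 1 (min η (e / (2*(S+1)))) with hrdef
  have hr : 0 < r := by
    refine lt_min one_pos (lt_min hη (by positivity))
  have hθabs : 0 < |θ| := abs_pos.mpr hθ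
  refine ⟨Real.sqrt (|θ| * (r/2) / Real.pi), Real.sqrt_pos.mpr (by positivity), ?_⟩
  intro lam hlam hlamδ τ hτ
  have hlam2 : (0:ℝ) < lam ^ 2 := by positivity
  set h : ℝ := Real.pi * lam ^ 2 / θ with hhdef
  have h1 : lam ^ 2 < |θ| * (r/2) / Real.pi := by
    calc lam ^ 2 = |lam| ^ 2 := (sq_abs lam).symm
    _ < Real.sqrt (|θ| * (r/2) / Real.pi) ^ 2 := by
        apply pow_lt_pow_left₀ hlamδ (abs_nonneg lam) two_ne_zero
    _ = |θ| * (r/2) / Real.pi := Real.sq_sqrt (by positivity)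
  have habs0 : |h| = Real.pi * lam ^ 2 / |θ| := by
    rw [hhdef, abs_div, abs_mul, abs_of_pos Real.pi_pos, abs_of_pos hlam2]
  have habs : |h| < r / 2 := by
    rw [habs0, div_lt_iff₀ hθabs]
    have := (lt_div_iff₀ Real.pi_pos).mp h1
    nlinarith
  set e_c : ℝ → ℂ := fun u => Complex.exp (Complex.I * ((θ:ℂ) * (u:ℂ) / (lam:ℂ)^2)) with hecdef
  have hec1 : ∀ u : ℝ, ‖e_c u‖ = 1 := by
    intro u
    have : Complex.I * ((θ:ℂ) * (u:ℂ) / (lam:ℂ)^2) = ((θ * u / lam^2 : ℝ) : ℂ) * Complex.I := by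
      push_cast; ring
    rw [hecdef]; simp only [this, Complex.norm_exp_ofReal_mul_I]
  have hlamC : ((lam:ℂ))^2 ≠ 0 := pow_ne_zero 2 (Complex.ofReal_ne_zero.mpr hlam)
  have hθC : (θ:ℂ) ≠ 0 := Complex.ofReal_ne_zero.mpr hθ
  have key : ∀ u : ℝ, e_c (u + h) = - e_c u := by
    intro u
    have harg : Complex.I * ((θ:ℂ) * ((u:ℂ) + (h:ℂ)) / (lam:ℂ)^2)
        = Complex.I * ((θ:ℂ) * (u:ℂ) / (lam:ℂ)^2) + (Real.pi : ℂ) * Complex.I := by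
      have hh : (h:ℂ) = (Real.pi:ℂ) * (lam:ℂ)^2 / (θ:ℂ) := by rw [hhdef]; push_cast; ring
      have hlC : (lam:ℂ) ≠ 0 := Complex.ofReal_ne_zero.mpr hlam
      rw [hh]; field_simp
    rw [hecdef]; simp only []
    rw [show ((u + h : ℝ) : ℂ) = (u:ℂ) + (h:ℂ) by push_cast; ring, harg,
      Complex.exp_add, Complex.exp_pi_mul_I, mul_neg_one]
  set g : ℝ → B := fun u => e_c u • v (u - h) with hgdef
  have hecont : Continuous e_c := Complex.continuous_exp.comp (by fun_prop)
  have hf : Continuous (fun u => e_c u • v u) := hecont.smul hv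
  have hg : Continuous g := hecont.smul (hv.comp (continuous_id.sub continuous_const))
  have hA : Continuous (fun u => e_c u • (v u - v (u - h))) :=
    hecont.smul (hv.sub (hv.comp (continuous_id.sub continuous_const)))
  have eq1 : (∫ u in (0:ℝ)..τ, e_c u • v u)
      = (∫ u in (0:ℝ)..τ, e_c u • (v u - v (u - h))) + ∫ u in (0:ℝ)..τ, g u := by
    rw [← intervalIntegral.integral_add (hA.intervalIntegrable _ _) (hg.intervalIntegrable _ _)]
    apply intervalIntegral.integral_congr
    intro u _
    simp [hgdef, smul_sub]
  have eq2 : (∫ u in (0:ℝ)..τ, e_c u • v u) = - ∫ u in h..(τ+h), g u := by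
    have hfg : ∀ u : ℝ, e_c u • v u = -(g (u + h)) := by
      intro u
      rw [hgdef]; simp only [add_sub_cancel_right, key u, neg_smul, neg_neg]
    calc (∫ u in (0:ℝ)..τ, e_c u • v u) = ∫ u in (0:ℝ)..τ, -(g (u + h)) :=
          intervalIntegral.integral_congr (fun u _ => hfg u)
    _ = - ∫ u in (0:ℝ)..τ, g (u + h) := intervalIntegral.integral_neg
    _ = - ∫ u in (0+h)..(τ+h), g u := by rw [intervalIntegral.integral_comp_add_right]
    _ = - ∫ u in h..(τ+h), g u := by rw [zero_add]
  have c1 : (∫ u in (0:ℝ)..h, g u) + ∫ u in h..(τ+h), g u = ∫ u in (0:ℝ)..(τ+h), g u :=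
    intervalIntegral.integral_add_adjacent_intervals (hg.intervalIntegrable _ _)
      (hg.intervalIntegrable _ _)
  have c2 : (∫ u in (0:ℝ)..τ, g u) + ∫ u in τ..(τ+h), g u = ∫ u in (0:ℝ)..(τ+h), g u :=
    intervalIntegral.integral_add_adjacent_intervals (hg.intervalIntegrable _ _)
      (hg.intervalIntegrable _ _)
  have key2 : (∫ u in (0:ℝ)..τ, e_c u • v u) + (∫ u in (0:ℝ)..τ, e_c u • v u)
      = (∫ u in (0:ℝ)..τ, e_c u • (v u - v (u - h)))
        + ((∫ u in (0:ℝ)..h, g u) - ∫ u in τ..(τ+h), g u) := by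
    nth_rewrite 1 [eq1]
    nth_rewrite 1 [eq2]
    have e3 : (∫ u in h..(τ+h), g u) = (∫ u in (0:ℝ)..(τ+h), g u) - ∫ u in (0:ℝ)..h, g u := by
      rw [← c1]; abel
    have e4 : (∫ u in τ..(τ+h), g u) = (∫ u in (0:ℝ)..(τ+h), g u) - ∫ u in (0:ℝ)..τ, g u := by
      rw [← c2]; abel
    rw [e3, e4]; abel
  -- norm estimates
  have nA : ‖∫ u in (0:ℝ)..τ, e_c u • (v u - v (u - h))‖ ≤ ε₂ * τ₁ := by
    have := intervalIntegral.norm_integral_le_of_norm_le_const (C := ε₂)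
      (f := fun u => e_c u • (v u - v (u - h))) (a := 0) (b := τ) ?_
    · calc ‖_‖ ≤ ε₂ * |τ - 0| := this
      _ ≤ ε₂ * τ₁ := by
          rw [sub_zero, abs_of_nonneg hτ.1]; exact mul_le_mul_of_nonneg_left hτ.2 hε₂.le
    · intro u hu
      rw [Set.uIoc_of_le hτ.1] at hu
      have hu1 : u ∈ Set.Icc (-1:ℝ) (τ₁+1) := by
        constructor <;> [linarith [hu.1]; linarith [hu.2, hτ.2]]
      have hu2 : u - h ∈ Set.Icc (-1:ℝ) (τ₁+1) := by
        have hr1 : r ≤ 1 := min_le_left _ _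
        have := abs_lt.mp habs
        constructor <;> [linarith [hu.1]; linarith [hu.2, hτ.2]]
      have hdist : dist u (u - h) < η := by
        rw [Real.dist_eq, sub_sub_cancel]
        have hrη : r ≤ η := (min_le_right _ _).trans (min_le_left _ _)
        linarith [habs]
      have := hηs u hu1 (u - h) hu2 hdist
      rw [dist_eq_norm] at this
      rw [norm_smul, hec1, one_mul]
      exact this.le
  have nG1 : ‖∫ u in (0:ℝ)..h, g u‖ ≤ S * |h| := by
    have := intervalIntegral.norm_integral_le_of_norm_le_const (C := S)
      (f := g) (a := 0) (b := h) ?_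
    · simpa using this
    · intro u _; rw [hgdef]; simp only []
      rw [norm_smul, hec1, one_mul]; exact hS _
  have nG2 : ‖∫ u in τ..(τ+h), g u‖ ≤ S * |h| := by
    have := intervalIntegral.norm_integral_le_of_norm_le_const (C := S)
      (f := g) (a := τ) (b := τ + h) ?_
    · simpa using this
    · intro u _; rw [hgdef]; simp only []
      rw [norm_smul, hec1, one_mul]; exact hS _
  have hnormsum : 2 * ‖∫ u in (0:ℝ)..τ, e_c u • v u‖ ≤ ε₂ * τ₁ + 2 * (S * |h|) := by
    have t1 : ‖(∫ u in (0:ℝ)..τ, e_c u • v u) + (∫ u in (0:ℝ)..τ, e_c u • v u)‖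
        = 2 * ‖∫ u in (0:ℝ)..τ, e_c u • v u‖ := by
      rw [← two_smul ℝ, norm_smul]; simp
    rw [← t1, key2]
    calc ‖_ + ((∫ u in (0:ℝ)..h, g u) - ∫ u in τ..(τ+h), g u)‖
        ≤ ‖∫ u in (0:ℝ)..τ, e_c u • (v u - v (u - h))‖
          + (‖∫ u in (0:ℝ)..h, g u‖ + ‖∫ u in τ..(τ+h), g u‖) :=
          (norm_add_le _ _).trans (by gcongr; exact norm_sub_le _ _)
    _ ≤ ε₂ * τ₁ + (S * |h| + S * |h|) := by gcongr
    _ = ε₂ * τ₁ + 2 * (S * |h|) := by ring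
  have hb1 : ε₂ * τ₁ < e := by
    rw [hε₂def, div_mul_eq_mul_div, div_lt_iff₀ (by positivity)]
    nlinarith
  have hb2 : 2 * (S * |h|) < e := by
    have hre : r ≤ e / (2*(S+1)) := (min_le_right _ _).trans (min_le_right _ _)
    have habs' : |h| ≤ e / (2*(S+1)) := by linarith [habs]
    have : S * |h| ≤ S * (e / (2*(S+1))) :=
      mul_le_mul_of_nonneg_left habs' hS0
    have h2 : S * (e / (2*(S+1))) < e / 2 := by
      rw [mul_div_assoc']
      rw [div_lt_div_iff₀ (by positivity) (by norm_num : (0:ℝ) < 2)]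
      nlinarith
    linarith
  linarith


set_option maxHeartbeats 2000000 in
/-- Step 2 of the proof of Davies' theorem: with `E(t) = Σ_α e^{−itω_α} Q_α` for a finite
family of distinct reals `ω_α` and projections `Q_α Q_β = δ_{αβ} Q_α`, `Σ_α Q_α = 1`, if the
kernels `K^λ : (0,τ₁] → B(B)` are continuous, uniformly bounded for small `λ ≠ 0`, and
converge to `K` uniformly on every `[τ₀,τ₁]` with `0 < τ₀ < τ₁`, then for every continuous
`σ : [0,τ₁] → B`,
`∫₀^τ E(−u/λ²) K^λ(τ−u) E(u/λ²) σ(u) du → ∫₀^τ K♮ σ(u) du` uniformly on `[0,τ₁]` as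
`λ → 0`, where `K♮ = Σ_α Q_α K Q_α`. -/
theorem rotated_kernel_tendsto_spectral_average
    (B : Type*) [NormedAddCommGroup B] [NormedSpace ℂ B] [CompleteSpace B]
    (A : Type*) [Fintype A] [DecidableEq A]
    (ω : A → ℝ) (hω : Function.Injective ω)
    (Qa : A → B →L[ℂ] B)
    (hQa : ∀ α β : A, Qa α ∘L Qa β = if α = β then Qa α else 0)
    (hQsum : ∑ α : A, Qa α = 1)
    (E : ℝ → B →L[ℂ] B)
    (hE : ∀ t : ℝ, E t = ∑ α : A, Complex.exp (-(Complex.I * t * (ω α : ℂ))) • Qa α)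
    (τ₁ : ℝ) (hτ₁ : 0 < τ₁)
    (K : B →L[ℂ] B)
    (Kl : ℝ → ℝ → B →L[ℂ] B)
    (hKlcont : ∀ lam : ℝ, lam ≠ 0 → ContinuousOn (Kl lam) (Set.Ioc 0 τ₁))
    (hKlbdd : ∃ lam₀ : ℝ, 0 < lam₀ ∧ ∃ M : ℝ, 0 ≤ M ∧ ∀ lam : ℝ, lam ≠ 0 → |lam| ≤ lam₀ →
      ∀ τ ∈ Set.Ioc (0:ℝ) τ₁, ‖Kl lam τ‖ ≤ M)
    (hKlconv : ∀ τ₀ : ℝ, 0 < τ₀ → τ₀ < τ₁ →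
      ∀ e : ℝ, 0 < e → ∃ δ : ℝ, 0 < δ ∧ ∀ lam : ℝ, lam ≠ 0 → |lam| < δ →
        ∀ τ ∈ Set.Icc τ₀ τ₁, ‖Kl lam τ - K‖ < e)
    (σ : ℝ → B) (hσ : ContinuousOn σ (Set.Icc 0 τ₁)) :
    ∀ e : ℝ, 0 < e → ∃ δ : ℝ, 0 < δ ∧ ∀ lam : ℝ, lam ≠ 0 → |lam| < δ →
      ∀ τ ∈ Set.Icc (0:ℝ) τ₁,
        ‖(∫ u in (0:ℝ)..τ,
            E (-(u / lam ^ 2)) ((Kl lam (τ - u)) ((E (u / lam ^ 2)) (σ u))))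
          - ∫ u in (0:ℝ)..τ, (∑ α : A, Qa α ∘L K ∘L Qa α) (σ u)‖ < e := by
  intro e he
  obtain ⟨lam₀, hlam₀, M, hM0, hMb⟩ := hKlbdd
  -- the clamped continuous extension of σ
  set c : ℝ → ℝ := fun u => max 0 (min u τ₁) with hcdef
  have hc : Continuous c := continuous_const.max (continuous_id.min continuous_const)
  have hcmem : ∀ u, c u ∈ Set.Icc (0:ℝ) τ₁ :=
    fun u => ⟨le_max_left _ _, max_le hτ₁.le (min_le_right _ _)⟩
  set σ' : ℝ → B := fun u => σ (c u) with hσ'def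
  have hσ' : Continuous σ' := hσ.comp_continuous hc hcmem
  have hσeq : ∀ u ∈ Set.Icc (0:ℝ) τ₁, σ' u = σ u := by
    intro u hu
    have : c u = u := by
      rw [hcdef]; simp only []; rw [min_eq_left hu.2, max_eq_right hu.1]
    rw [hσ'def]; simp only []; rw [this]
  obtain ⟨S₀, hS₀⟩ := isCompact_Icc.exists_bound_of_continuousOn hσ
  set S : ℝ := max S₀ 0 with hSdef
  have hS : ∀ u, ‖σ' u‖ ≤ S := fun u => (hS₀ _ (hcmem u)).trans (le_max_left _ _)
  have hS0 : (0:ℝ) ≤ S := le_max_right _ _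
  -- norm bound on E
  set CE : ℝ := ∑ α : A, ‖Qa α‖ with hCEdef
  have hCE0 : 0 ≤ CE := Finset.sum_nonneg fun α _ => norm_nonneg _
  have hexp1 : ∀ (t w : ℝ), ‖Complex.exp (-(Complex.I * (t:ℂ) * (w:ℂ)))‖ = 1 := by
    intro t w
    have : (-(Complex.I * (t:ℂ) * (w:ℂ))) = ((-(t * w) : ℝ) : ℂ) * Complex.I := by
      push_cast; ring
    rw [this, Complex.norm_exp_ofReal_mul_I]
  have hEnorm : ∀ t : ℝ, ‖E t‖ ≤ CE := by
    intro t
    rw [hE]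
    refine (norm_sum_le _ _).trans (Finset.sum_le_sum fun α _ => ?_)
    rw [norm_smul (Complex.exp (-(Complex.I * t * (ω α : ℂ)))) (Qa α), hexp1, one_mul]
  have hEcont : Continuous E := by
    have : E = fun t : ℝ => ∑ α : A, Complex.exp (-(Complex.I * t * (ω α : ℂ))) • Qa α :=
      funext hE
    rw [this]
    exact continuous_finset_sum _ fun α _ =>
      (Complex.continuous_exp.comp (by fun_prop)).smul continuous_const
  -- constants
  set C1 : ℝ := CE * ((M + ‖K‖) * (CE * S)) with hC1def
  have hC1 : 0 ≤ C1 := by positivity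
  set τ₀ : ℝ := min (τ₁/2) ((e/4) / (C1+1)) with hτ₀def
  have hτ₀pos : 0 < τ₀ := lt_min (by linarith) (by positivity)
  have hτ₀lt : τ₀ < τ₁ := (min_le_left _ _).trans_lt (by linarith)
  set εr : ℝ := (e/4) / (CE^2*S*τ₁ + 1) with hεrdef
  have hεr : 0 < εr := by positivity
  obtain ⟨δ₁, hδ₁pos, hδ₁⟩ := hKlconv τ₀ hτ₀pos hτ₀lt εr hεr
  set N : ℝ := (Fintype.card A : ℝ) with hNdef
  have hN0 : 0 ≤ N := by positivity
  set e2 : ℝ := e / (2 * (N^2 + 1)) with he2def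
  have he2 : 0 < e2 := by positivity
  -- oscillatory bounds for off-diagonal pairs
  have hosc : ∀ α β : A, ∃ δ : ℝ, 0 < δ ∧ (α ≠ β → ∀ lam : ℝ, lam ≠ 0 → |lam| < δ →
      ∀ τ ∈ Set.Icc (0:ℝ) τ₁,
      ‖∫ u in (0:ℝ)..τ, Complex.exp (Complex.I *
          (((ω α - ω β : ℝ) : ℂ) * (u:ℂ) / (lam:ℂ)^2)) • ((Qa α ∘L K ∘L Qa β) (σ' u))‖
        < e2) := by
    intro α β
    by_cases hab : α = β
    · exact ⟨1, one_pos, fun hne => absurd hab hne⟩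
    · obtain ⟨δ, hδ, hspec⟩ := osc_aux (fun u => (Qa α ∘L K ∘L Qa β) (σ' u))
        ((Qa α ∘L K ∘L Qa β).continuous.comp hσ') (‖Qa α ∘L K ∘L Qa β‖ * S)
        (fun u => ((Qa α ∘L K ∘L Qa β).le_opNorm _).trans
          (mul_le_mul_of_nonneg_left (hS u) (norm_nonneg _)))
        τ₁ hτ₁ (ω α - ω β) (sub_ne_zero.mpr fun hh => hab (hω hh)) e2 he2
      exact ⟨δ, hδ, fun _ => hspec⟩
  choose δf hδfpos hδfspec using hosc
  obtain ⟨δo, hδopos, hδole⟩ : ∃ δo : ℝ, 0 < δo ∧ ∀ α β : A, δo ≤ δf α β := by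
    by_cases hA : Nonempty A
    · have hne : (Finset.univ : Finset (A × A)).Nonempty := Finset.univ_nonempty
      refine ⟨Finset.univ.inf' hne (fun p => δf p.1 p.2), ?_, ?_⟩
      · rw [Finset.lt_inf'_iff]; intro p _; exact hδfpos _ _
      · intro α β; exact Finset.inf'_le _ (Finset.mem_univ (α, β))
    · exact ⟨1, one_pos, fun α => (hA ⟨α⟩).elim⟩
  refine ⟨min δ₁ (min lam₀ δo), lt_min hδ₁pos (lt_min hlam₀ hδopos), ?_⟩
  intro lam hlam hlamδ τ hτ
  have hlamδ₁ : |lam| < δ₁ := hlamδ.trans_le (min_le_left _ _)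
  have hlamlam₀ : |lam| ≤ lam₀ :=
    (hlamδ.trans_le ((min_le_right _ _).trans (min_le_left _ _))).le
  have hlamo : ∀ α β : A, |lam| < δf α β := fun α β =>
    (hlamδ.trans_le ((min_le_right _ _).trans (min_le_right _ _))).trans_le (hδole α β)
  have hτ0 : (0:ℝ) ≤ τ := hτ.1
  have hτless : τ ≤ τ₁ := hτ.2
  -- pointwise expansion
  have P1 : ∀ u : ℝ,
      E (-(u / lam ^ 2)) (K ((E (u / lam ^ 2)) (σ' u)))
        = ∑ α : A, ∑ β : A, Complex.exp (Complex.I *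
            (((ω α - ω β : ℝ) : ℂ) * (u:ℂ) / (lam:ℂ)^2)) • ((Qa α ∘L K ∘L Qa β) (σ' u)) := by
    intro u
    rw [hE, hE]
    simp only [ContinuousLinearMap.sum_apply, ContinuousLinearMap.smul_apply, map_sum,
      _root_.map_smul, Finset.smul_sum, smul_smul, ContinuousLinearMap.coe_comp',
      Function.comp_apply]
    rw [Finset.sum_comm]
    refine Finset.sum_congr rfl fun α _ => Finset.sum_congr rfl fun β _ => ?_
    rw [← Complex.exp_add]
    congr 2
    push_cast
    ring
  have Pdiag : ∀ (α : A) (u : ℝ),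
      Complex.exp (Complex.I * (((ω α - ω α : ℝ) : ℂ) * (u:ℂ) / (lam:ℂ)^2))
          • ((Qa α ∘L K ∘L Qa α) (σ' u))
        = (Qa α ∘L K ∘L Qa α) (σ' u) := by
    intro α u
    simp [sub_self]
  -- continuity of the oscillatory integrands
  have hfabc : ∀ α β : A, Continuous (fun u : ℝ => Complex.exp (Complex.I *
      (((ω α - ω β : ℝ) : ℂ) * (u:ℂ) / (lam:ℂ)^2)) • ((Qa α ∘L K ∘L Qa β) (σ' u))) :=
    fun α β => (Complex.continuous_exp.comp (by fun_prop)).smul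
      ((Qa α ∘L K ∘L Qa β).continuous.comp hσ')
  -- bound on the D integrand
  have hDb : ∀ u : ℝ, 0 ≤ u → u < τ →
      ‖E (-(u / lam ^ 2)) ((Kl lam (τ - u) - K) ((E (u / lam ^ 2)) (σ' u)))‖ ≤ C1 := by
    intro u h0 h1
    have hy : ‖(E (u / lam ^ 2)) (σ' u)‖ ≤ CE * S :=
      ((E (u / lam ^ 2)).le_opNorm _).trans
        (mul_le_mul (hEnorm _) (hS u) (norm_nonneg _) hCE0)
    have hKlM : ‖Kl lam (τ - u)‖ ≤ M :=
      hMb lam hlam hlamlam₀ (τ - u) ⟨by linarith, by linarith⟩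
    have hop : ‖Kl lam (τ - u) - K‖ ≤ M + ‖K‖ :=
      (norm_sub_le _ _).trans (by gcongr)
    calc ‖E (-(u / lam ^ 2)) ((Kl lam (τ - u) - K) ((E (u / lam ^ 2)) (σ' u)))‖
        ≤ ‖E (-(u / lam ^ 2))‖ * (‖Kl lam (τ - u) - K‖ * ‖(E (u / lam ^ 2)) (σ' u)‖) :=
          ((E _).le_opNorm _).trans
            (mul_le_mul_of_nonneg_left ((Kl lam (τ - u) - K).le_opNorm _) (norm_nonneg _))
    _ ≤ CE * ((M + ‖K‖) * (CE * S)) := by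
        apply mul_le_mul (hEnorm _) _ (by positivity) hCE0
        exact mul_le_mul hop hy (norm_nonneg _) (by positivity)
  -- integrability of the D integrand
  have hDib : IntervalIntegrable
      (fun u => E (-(u / lam ^ 2)) ((Kl lam (τ - u) - K) ((E (u / lam ^ 2)) (σ' u))))
      volume 0 τ := by
    rw [intervalIntegrable_iff_integrableOn_Ioc_of_le hτ0,
      integrableOn_Ioc_iff_integrableOn_Ioo]
    have hcont : ContinuousOn
        (fun u => E (-(u / lam ^ 2)) ((Kl lam (τ - u) - K) ((E (u / lam ^ 2)) (σ' u))))
        (Set.Ioo 0 τ) := by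
      apply ContinuousOn.clm_apply
      · exact (hEcont.comp (by fun_prop)).continuousOn
      · apply ContinuousOn.clm_apply
        · apply ContinuousOn.sub _ continuousOn_const
          apply (hKlcont lam hlam).comp (Continuous.continuousOn (by fun_prop))
          intro u hu
          exact ⟨by linarith [hu.2], by linarith [hu.1]⟩
        · exact ((hEcont.comp (by fun_prop)).clm_apply hσ').continuousOn
    exact Integrable.mono' (integrableOn_const (C := C1) measure_Ioo_lt_top.ne)
      (hcont.aestronglyMeasurable measurableSet_Ioo)
      ((ae_restrict_iff' measurableSet_Ioo).mpr (Filter.Eventually.of_forall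
        fun u hu => hDb u hu.1.le hu.2))
  -- split point
  set s : ℝ := max 0 (τ - τ₀) with hsdef
  have hs0 : (0:ℝ) ≤ s := le_max_left _ _
  have hsτ : s ≤ τ := max_le hτ0 (by linarith)
  have hsτ₁ : s ≤ τ₁ := hsτ.trans hτless
  have hI1 : IntervalIntegrable
      (fun u => E (-(u / lam ^ 2)) ((Kl lam (τ - u) - K) ((E (u / lam ^ 2)) (σ' u))))
      volume 0 s := by
    apply hDib.mono_set
    rw [Set.uIcc_of_le hs0, Set.uIcc_of_le hτ0]
    exact Set.Icc_subset_Icc le_rfl hsτ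
  have hI2 : IntervalIntegrable
      (fun u => E (-(u / lam ^ 2)) ((Kl lam (τ - u) - K) ((E (u / lam ^ 2)) (σ' u))))
      volume s τ := by
    apply hDib.mono_set
    rw [Set.uIcc_of_le hsτ, Set.uIcc_of_le hτ0]
    exact Set.Icc_subset_Icc hs0 le_rfl
  -- bound on the first piece
  have bound1 : ‖∫ u in (0:ℝ)..s,
      E (-(u / lam ^ 2)) ((Kl lam (τ - u) - K) ((E (u / lam ^ 2)) (σ' u)))‖
      ≤ CE * (εr * (CE * S)) * τ₁ := by
    have hb := intervalIntegral.norm_integral_le_of_norm_le_const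
      (C := CE * (εr * (CE * S)))
      (f := fun u => E (-(u / lam ^ 2)) ((Kl lam (τ - u) - K) ((E (u / lam ^ 2)) (σ' u))))
      (a := 0) (b := s) ?_
    · calc ‖_‖ ≤ CE * (εr * (CE * S)) * |s - 0| := hb
      _ ≤ CE * (εr * (CE * S)) * τ₁ := by
          rw [sub_zero, abs_of_nonneg hs0]
          exact mul_le_mul_of_nonneg_left hsτ₁ (by positivity)
    · intro u hu
      rw [Set.uIoc_of_le hs0] at hu
      have hu0 : 0 < u := hu.1
      have hucase : u ≤ τ - τ₀ := by
        rcases le_or_gt (τ - τ₀) 0 with hcase | hcase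
        · exfalso
          have : s = 0 := max_eq_left hcase
          rw [this] at hu
          linarith [hu.2]
        · have : s = τ - τ₀ := max_eq_right hcase.le
          rw [this] at hu
          exact hu.2
      have hclose : ‖Kl lam (τ - u) - K‖ < εr :=
        hδ₁ lam hlam hlamδ₁ (τ - u) ⟨by linarith, by linarith⟩
      have hy : ‖(E (u / lam ^ 2)) (σ' u)‖ ≤ CE * S :=
        ((E (u / lam ^ 2)).le_opNorm _).trans
          (mul_le_mul (hEnorm _) (hS u) (norm_nonneg _) hCE0)
      calc ‖E (-(u / lam ^ 2)) ((Kl lam (τ - u) - K) ((E (u / lam ^ 2)) (σ' u)))‖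
          ≤ ‖E (-(u / lam ^ 2))‖ * (‖Kl lam (τ - u) - K‖ * ‖(E (u / lam ^ 2)) (σ' u)‖) :=
            ((E _).le_opNorm _).trans
              (mul_le_mul_of_nonneg_left ((Kl lam (τ - u) - K).le_opNorm _) (norm_nonneg _))
      _ ≤ CE * (εr * (CE * S)) := by
          apply mul_le_mul (hEnorm _) _ (by positivity) hCE0
          exact mul_le_mul hclose.le hy (norm_nonneg _) hεr.le
  -- bound on the second piece
  have bound2 : ‖∫ u in s..τ,
      E (-(u / lam ^ 2)) ((Kl lam (τ - u) - K) ((E (u / lam ^ 2)) (σ' u)))‖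
      ≤ C1 * τ₀ := by
    have hae : ∀ᵐ u : ℝ, u ≠ τ := by
      rw [MeasureTheory.ae_iff]
      have : {u : ℝ | ¬u ≠ τ} = {τ} := by ext u; simp
      rw [this]
      exact Real.volume_singleton
    have hb := intervalIntegral.norm_integral_le_of_norm_le_const_ae (C := C1)
      (f := fun u => E (-(u / lam ^ 2)) ((Kl lam (τ - u) - K) ((E (u / lam ^ 2)) (σ' u))))
      (a := s) (b := τ) ?_
    · calc ‖_‖ ≤ C1 * |τ - s| := hb
      _ ≤ C1 * τ₀ := by
          apply mul_le_mul_of_nonneg_left _ hC1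
          rw [abs_of_nonneg (by linarith)]
          have := le_max_right (0:ℝ) (τ - τ₀)
          linarith
    · filter_upwards [hae] with u hu hu2
      rw [Set.uIoc_of_le hsτ] at hu2
      exact hDb u (le_trans hs0 hu2.1.le) (lt_of_le_of_ne hu2.2 hu)
  -- full D bound
  have hDnorm : ‖∫ u in (0:ℝ)..τ,
      E (-(u / lam ^ 2)) ((Kl lam (τ - u) - K) ((E (u / lam ^ 2)) (σ' u)))‖ ≤ e/2 := by
    have hsplit := intervalIntegral.integral_add_adjacent_intervals hI1 hI2
    have q1 : CE * (εr * (CE * S)) * τ₁ ≤ e/4 := by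
      have hX : (0:ℝ) ≤ CE^2*S*τ₁ := by positivity
      have heq : CE * (εr * (CE * S)) * τ₁ = (CE^2*S*τ₁) * ((e/4)/(CE^2*S*τ₁+1)) := by
        rw [hεrdef]; ring
      rw [heq]
      calc (CE^2*S*τ₁) * ((e/4)/(CE^2*S*τ₁+1))
          ≤ (CE^2*S*τ₁+1) * ((e/4)/(CE^2*S*τ₁+1)) := by
            apply mul_le_mul_of_nonneg_right (by linarith) (by positivity)
      _ = e/4 := mul_div_cancel₀ _ (by positivity)
    have q2 : C1 * τ₀ ≤ e/4 := by
      have hmin : τ₀ ≤ (e/4)/(C1+1) := min_le_right _ _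
      calc C1 * τ₀ ≤ C1 * ((e/4)/(C1+1)) := mul_le_mul_of_nonneg_left hmin hC1
      _ ≤ (C1+1) * ((e/4)/(C1+1)) := by
          apply mul_le_mul_of_nonneg_right (by linarith) (by positivity)
      _ = e/4 := mul_div_cancel₀ _ (by positivity)
    calc ‖∫ u in (0:ℝ)..τ,
        E (-(u / lam ^ 2)) ((Kl lam (τ - u) - K) ((E (u / lam ^ 2)) (σ' u)))‖
        = ‖(∫ u in (0:ℝ)..s,
            E (-(u / lam ^ 2)) ((Kl lam (τ - u) - K) ((E (u / lam ^ 2)) (σ' u))))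
          + ∫ u in s..τ,
            E (-(u / lam ^ 2)) ((Kl lam (τ - u) - K) ((E (u / lam ^ 2)) (σ' u)))‖ := by
          rw [hsplit]
    _ ≤ CE * (εr * (CE * S)) * τ₁ + C1 * τ₀ := (norm_add_le _ _).trans (add_le_add bound1 bound2)
    _ ≤ e/2 := by linarith
  -- rewrite the G integral as a double sum
  have hGsum : (∫ u in (0:ℝ)..τ, E (-(u / lam ^ 2)) (K ((E (u / lam ^ 2)) (σ' u))))
      = ∑ α : A, ∑ β : A, ∫ u in (0:ℝ)..τ, Complex.exp (Complex.I *
          (((ω α - ω β : ℝ) : ℂ) * (u:ℂ) / (lam:ℂ)^2)) • ((Qa α ∘L K ∘L Qa β) (σ' u)) := by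
    rw [intervalIntegral.integral_congr (g := fun u => ∑ α : A, ∑ β : A,
      Complex.exp (Complex.I * (((ω α - ω β : ℝ) : ℂ) * (u:ℂ) / (lam:ℂ)^2))
        • ((Qa α ∘L K ∘L Qa β) (σ' u))) (fun u _ => P1 u)]
    rw [intervalIntegral.integral_finset_sum (fun α _ =>
      (continuous_finset_sum _ fun β _ => hfabc α β).intervalIntegrable _ _)]
    exact Finset.sum_congr rfl fun α _ =>
      intervalIntegral.integral_finset_sum fun β _ => (hfabc α β).intervalIntegrable _ _
  -- the K♮ integral as a sum of diagonal terms
  have hKnat : (∫ u in (0:ℝ)..τ, (∑ α : A, Qa α ∘L K ∘L Qa α) (σ' u))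
      = ∑ α : A, ∫ u in (0:ℝ)..τ, Complex.exp (Complex.I *
          (((ω α - ω α : ℝ) : ℂ) * (u:ℂ) / (lam:ℂ)^2)) • ((Qa α ∘L K ∘L Qa α) (σ' u)) := by
    rw [intervalIntegral.integral_congr (g := fun u => ∑ α : A,
      (Qa α ∘L K ∘L Qa α) (σ' u)) (fun u _ => by simp [ContinuousLinearMap.sum_apply])]
    rw [intervalIntegral.integral_finset_sum (fun α _ =>
      (show Continuous fun u : ℝ => (Qa α ∘L K ∘L Qa α) (σ' u) from
        (Qa α ∘L K ∘L Qa α).continuous.comp hσ').intervalIntegrable _ _)]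
    exact Finset.sum_congr rfl fun α _ =>
      (intervalIntegral.integral_congr (fun u _ => (Pdiag α u).symm))
  -- the off-diagonal remainder
  have hGdecomp : (∑ α : A, ∑ β : A, ∫ u in (0:ℝ)..τ, Complex.exp (Complex.I *
        (((ω α - ω β : ℝ) : ℂ) * (u:ℂ) / (lam:ℂ)^2)) • ((Qa α ∘L K ∘L Qa β) (σ' u)))
      - (∑ α : A, ∫ u in (0:ℝ)..τ, Complex.exp (Complex.I *
        (((ω α - ω α : ℝ) : ℂ) * (u:ℂ) / (lam:ℂ)^2)) • ((Qa α ∘L K ∘L Qa α) (σ' u)))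
      = ∑ α : A, ∑ β ∈ Finset.univ.erase α, ∫ u in (0:ℝ)..τ, Complex.exp (Complex.I *
        (((ω α - ω β : ℝ) : ℂ) * (u:ℂ) / (lam:ℂ)^2)) • ((Qa α ∘L K ∘L Qa β) (σ' u)) := by
    have hterm : ∀ α : A, (∑ β : A, ∫ u in (0:ℝ)..τ, Complex.exp (Complex.I *
        (((ω α - ω β : ℝ) : ℂ) * (u:ℂ) / (lam:ℂ)^2)) • ((Qa α ∘L K ∘L Qa β) (σ' u)))
        = (∫ u in (0:ℝ)..τ, Complex.exp (Complex.I *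
            (((ω α - ω α : ℝ) : ℂ) * (u:ℂ) / (lam:ℂ)^2)) • ((Qa α ∘L K ∘L Qa α) (σ' u)))
          + ∑ β ∈ Finset.univ.erase α, ∫ u in (0:ℝ)..τ, Complex.exp (Complex.I *
            (((ω α - ω β : ℝ) : ℂ) * (u:ℂ) / (lam:ℂ)^2)) • ((Qa α ∘L K ∘L Qa β) (σ' u)) :=
      fun α => (Finset.add_sum_erase _ _ (Finset.mem_univ α)).symm
    rw [Finset.sum_congr rfl fun α _ => hterm α, Finset.sum_add_distrib]
    abel
  have hRbound : ‖∑ α : A, ∑ β ∈ Finset.univ.erase α, ∫ u in (0:ℝ)..τ,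
      Complex.exp (Complex.I * (((ω α - ω β : ℝ) : ℂ) * (u:ℂ) / (lam:ℂ)^2))
        • ((Qa α ∘L K ∘L Qa β) (σ' u))‖ < e/2 := by
    have hone : ∀ α : A, ∀ β ∈ Finset.univ.erase α, ‖∫ u in (0:ℝ)..τ,
        Complex.exp (Complex.I * (((ω α - ω β : ℝ) : ℂ) * (u:ℂ) / (lam:ℂ)^2))
          • ((Qa α ∘L K ∘L Qa β) (σ' u))‖ ≤ e2 := by
      intro α β hβ
      have hne : α ≠ β := fun hh => (Finset.mem_erase.mp hβ).1 hh.symm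
      exact (hδfspec α β hne lam hlam (hlamo α β) τ hτ).le
    calc ‖∑ α : A, ∑ β ∈ Finset.univ.erase α, ∫ u in (0:ℝ)..τ,
        Complex.exp (Complex.I * (((ω α - ω β : ℝ) : ℂ) * (u:ℂ) / (lam:ℂ)^2))
          • ((Qa α ∘L K ∘L Qa β) (σ' u))‖
        ≤ ∑ α : A, ∑ β ∈ Finset.univ.erase α, ‖∫ u in (0:ℝ)..τ,
          Complex.exp (Complex.I * (((ω α - ω β : ℝ) : ℂ) * (u:ℂ) / (lam:ℂ)^2))
            • ((Qa α ∘L K ∘L Qa β) (σ' u))‖ :=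
          (norm_sum_le _ _).trans (Finset.sum_le_sum fun α _ => norm_sum_le _ _)
    _ ≤ ∑ α : A, ∑ β ∈ Finset.univ.erase α, e2 :=
        Finset.sum_le_sum fun α _ => Finset.sum_le_sum fun β hβ => hone α β hβ
    _ ≤ ∑ _α : A, ∑ _β : A, e2 := by
        apply Finset.sum_le_sum
        intro α _
        exact Finset.sum_le_sum_of_subset_of_nonneg (Finset.erase_subset _ _)
          (fun _ _ _ => he2.le)
    _ = N^2 * e2 := by
        simp [Finset.sum_const, hNdef]
        ring
    _ < e/2 := by
        rw [he2def, mul_div_assoc', div_lt_div_iff₀ (by positivity) (by norm_num : (0:ℝ) < 2)]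
        nlinarith
  -- assemble
  have ha1 : (∫ u in (0:ℝ)..τ,
      E (-(u / lam ^ 2)) ((Kl lam (τ - u)) ((E (u / lam ^ 2)) (σ u))))
      = ∫ u in (0:ℝ)..τ,
        E (-(u / lam ^ 2)) ((Kl lam (τ - u)) ((E (u / lam ^ 2)) (σ' u))) := by
    apply intervalIntegral.integral_congr
    intro u hu
    rw [Set.uIcc_of_le hτ0] at hu
    simp only [hσeq u ⟨hu.1, hu.2.trans hτless⟩]
  have ha2 : (∫ u in (0:ℝ)..τ, (∑ α : A, Qa α ∘L K ∘L Qa α) (σ u))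
      = ∫ u in (0:ℝ)..τ, (∑ α : A, Qa α ∘L K ∘L Qa α) (σ' u) := by
    apply intervalIntegral.integral_congr
    intro u hu
    rw [Set.uIcc_of_le hτ0] at hu
    simp only [hσeq u ⟨hu.1, hu.2.trans hτless⟩]
  have hGint : IntervalIntegrable
      (fun u => E (-(u / lam ^ 2)) (K ((E (u / lam ^ 2)) (σ' u)))) volume 0 τ := by
    rw [show (fun u : ℝ => E (-(u / lam ^ 2)) (K ((E (u / lam ^ 2)) (σ' u))))
      = fun u : ℝ => ∑ α : A, ∑ β : A, Complex.exp (Complex.I *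
          (((ω α - ω β : ℝ) : ℂ) * (u:ℂ) / (lam:ℂ)^2)) • ((Qa α ∘L K ∘L Qa β) (σ' u))
      from funext P1]
    exact (continuous_finset_sum _ fun α _ =>
      continuous_finset_sum _ fun β _ => hfabc α β).intervalIntegrable _ _
  have ha3 : (∫ u in (0:ℝ)..τ,
      E (-(u / lam ^ 2)) ((Kl lam (τ - u)) ((E (u / lam ^ 2)) (σ' u))))
      = (∫ u in (0:ℝ)..τ,
          E (-(u / lam ^ 2)) ((Kl lam (τ - u) - K) ((E (u / lam ^ 2)) (σ' u))))
        + ∫ u in (0:ℝ)..τ, E (-(u / lam ^ 2)) (K ((E (u / lam ^ 2)) (σ' u))) := by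
    rw [← intervalIntegral.integral_add hDib hGint]
    apply intervalIntegral.integral_congr
    intro u _
    simp only [ContinuousLinearMap.sub_apply, map_sub]
    abel
  rw [ha1, ha2, ha3, hGsum, hKnat]
  have hfinal : (∫ u in (0:ℝ)..τ,
        E (-(u / lam ^ 2)) ((Kl lam (τ - u) - K) ((E (u / lam ^ 2)) (σ' u))))
      + (∑ α : A, ∑ β : A, ∫ u in (0:ℝ)..τ, Complex.exp (Complex.I *
          (((ω α - ω β : ℝ) : ℂ) * (u:ℂ) / (lam:ℂ)^2)) • ((Qa α ∘L K ∘L Qa β) (σ' u)))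
      - (∑ α : A, ∫ u in (0:ℝ)..τ, Complex.exp (Complex.I *
          (((ω α - ω α : ℝ) : ℂ) * (u:ℂ) / (lam:ℂ)^2)) • ((Qa α ∘L K ∘L Qa α) (σ' u)))
      = (∫ u in (0:ℝ)..τ,
          E (-(u / lam ^ 2)) ((Kl lam (τ - u) - K) ((E (u / lam ^ 2)) (σ' u))))
        + ∑ α : A, ∑ β ∈ Finset.univ.erase α, ∫ u in (0:ℝ)..τ, Complex.exp (Complex.I *
          (((ω α - ω β : ℝ) : ℂ) * (u:ℂ) / (lam:ℂ)^2)) • ((Qa α ∘L K ∘L Qa β) (σ' u)) := by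
    rw [← hGdecomp]
    abel
  rw [hfinal]
  calc ‖_ + _‖ ≤ ‖∫ u in (0:ℝ)..τ,
        E (-(u / lam ^ 2)) ((Kl lam (τ - u) - K) ((E (u / lam ^ 2)) (σ' u)))‖
      + ‖∑ α : A, ∑ β ∈ Finset.univ.erase α, ∫ u in (0:ℝ)..τ, Complex.exp (Complex.I *
          (((ω α - ω β : ℝ) : ℂ) * (u:ℂ) / (lam:ℂ)^2)) • ((Qa α ∘L K ∘L Qa β) (σ' u))‖ :=
      norm_add_le _ _
  _ < e := by linarith
end
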